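/- arXiv:2507.01097 — 7 statements merged into one kernel-verified Lean document; each statement's English description precedes it below -/
import Mathlib

section
/- In the poset of cylindric shapes of period (d,L) ordered by containment (μ ⊆ λ iff μ_i ≤ λ_i for all i), for any two distinct shapes ρ ≠ ν, the number of shapes covered by both ρ and ν equals the number of shapes covering both ρ and ν, and this common number is 0 or 1. -/
/-- A cylindric shape of period `(d, L)`. -/
def IsCylindricShape (d L : ℕ) (a : ℤ → ℤ) : Prop :=
  (∀ i j : ℤ, i ≤ j → a j ≤ a i) ∧ ∀ i : ℤ, a i = a (i + d) + L

/-- Adding a cell in row `i`: increase `a j` by `1` for all `j ≡ i (mod d)`. -/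
def addCellAt (d : ℕ) (i : ℤ) (a : ℤ → ℤ) : ℤ → ℤ :=
  fun j => if (d : ℤ) ∣ (j - i) then a j + 1 else a j

/-- `b` covers `a` in the poset of cylindric shapes of period `(d,L)`:
both are shapes and `b` is obtained from `a` by adding one cell. -/
def CovShape (d L : ℕ) (a b : ℤ → ℤ) : Prop :=
  IsCylindricShape d L a ∧ IsCylindricShape d L b ∧ ∃ i : ℤ, b = addCellAt d i a

lemma addCellAt_congr (d : ℕ) (i i' : ℤ) (a : ℤ → ℤ) (h : (d : ℤ) ∣ (i' - i)) :
    addCellAt d i a = addCellAt d i' a := by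
  funext j
  have hiff : (d : ℤ) ∣ (j - i) ↔ (d : ℤ) ∣ (j - i') := by
    constructor
    · intro hj
      have h2 : j - i' = (j - i) - (i' - i) := by ring
      rw [h2]; exact dvd_sub hj h
    · intro hj
      have h2 : j - i = (j - i') + (i' - i) := by ring
      rw [h2]; exact dvd_add hj h
  simp only [addCellAt, hiff]

lemma addCellAt_inj (d : ℕ) (i : ℤ) (a b : ℤ → ℤ)
    (h : addCellAt d i a = addCellAt d i b) : a = b := by
  funext j
  have := congrFun h j
  simp only [addCellAt] at this
  split_ifs at this <;> omega

lemma not_both_dvd (d : ℕ) (i i' j : ℤ) (hnd : ¬ (d : ℤ) ∣ (i' - i))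
    (h1 : (d : ℤ) ∣ (j - i)) (h2 : (d : ℤ) ∣ (j - i')) : False := by
  apply hnd
  have h3 : i' - i = (j - i) - (j - i') := by ring
  rw [h3]; exact dvd_sub h1 h2

lemma shape_min (d L : ℕ) (a b : ℤ → ℤ) (ha : IsCylindricShape d L a)
    (hb : IsCylindricShape d L b) :
    IsCylindricShape d L (fun j => min (a j) (b j)) := by
  refine ⟨fun i j hij => min_le_min (ha.1 i j hij) (hb.1 i j hij), fun i => ?_⟩
  simp only
  rw [ha.2 i, hb.2 i]
  omega

lemma shape_max (d L : ℕ) (a b : ℤ → ℤ) (ha : IsCylindricShape d L a)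
    (hb : IsCylindricShape d L b) :
    IsCylindricShape d L (fun j => max (a j) (b j)) := by
  refine ⟨fun i j hij => max_le_max (ha.1 i j hij) (hb.1 i j hij), fun i => ?_⟩
  simp only
  rw [ha.2 i, hb.2 i]
  omega

/-- In the poset of cylindric shapes, for distinct shapes `ρ ≠ ν`, the number of
shapes covered by both equals the number of shapes covering both, and this common
number is `0` or `1`. -/
theorem stmt8 (d L : ℕ) (hd : 1 ≤ d) (hL : 1 ≤ L) (ρ ν : ℤ → ℤ)
    (hρ : IsCylindricShape d L ρ) (hν : IsCylindricShape d L ν) (hne : ρ ≠ ν) :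
    Nat.card {σ : ℤ → ℤ // CovShape d L σ ρ ∧ CovShape d L σ ν} =
      Nat.card {τ : ℤ → ℤ // CovShape d L ρ τ ∧ CovShape d L ν τ} ∧
    Nat.card {σ : ℤ → ℤ // CovShape d L σ ρ ∧ CovShape d L σ ν} ≤ 1 := by
  -- any common lower cover is the pointwise min
  have hmin : ∀ σ, CovShape d L σ ρ → CovShape d L σ ν →
      σ = fun j => min (ρ j) (ν j) := by
    rintro σ ⟨hσ, _, i, hiρ⟩ ⟨-, -, i', hiν⟩
    have hnd : ¬ (d : ℤ) ∣ (i' - i) := fun h =>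
      hne (by rw [hiρ, hiν, addCellAt_congr d i i' σ h])
    funext j
    rw [hiρ, hiν]
    simp only [addCellAt]
    by_cases h1 : (d : ℤ) ∣ (j - i)
    · have h2 : ¬ (d : ℤ) ∣ (j - i') := fun h2 => not_both_dvd d i i' j hnd h1 h2
      simp only [if_pos h1, if_neg h2]; omega
    · simp only [if_neg h1]
      by_cases h2 : (d : ℤ) ∣ (j - i') <;> simp only [if_pos, if_neg, h2, if_true,
        if_false] <;> omega
  -- any common upper cover is the pointwise max
  have hmax : ∀ τ, CovShape d L ρ τ → CovShape d L ν τ →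
      τ = fun j => max (ρ j) (ν j) := by
    rintro τ ⟨-, -, i, hiρ⟩ ⟨-, -, i', hiν⟩
    have hnd : ¬ (d : ℤ) ∣ (i' - i) := by
      intro h
      apply hne
      apply addCellAt_inj d i'
      rw [← addCellAt_congr d i i' ρ h, ← hiρ, hiν]
    funext j
    have hρj := congrFun hiρ j
    have hνj := congrFun hiν j
    simp only [addCellAt] at hρj hνj
    by_cases h1 : (d : ℤ) ∣ (j - i)
    · have h2 : ¬ (d : ℤ) ∣ (j - i') := fun h2 => not_both_dvd d i i' j hnd h1 h2
      rw [if_pos h1] at hρj; rw [if_neg h2] at hνj; omega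
    · rw [if_neg h1] at hρj
      by_cases h2 : (d : ℤ) ∣ (j - i')
      · rw [if_pos h2] at hνj; omega
      · rw [if_neg h2] at hνj; omega
  -- existence of a lower cover gives existence of an upper cover
  have hup : (∃ σ, CovShape d L σ ρ ∧ CovShape d L σ ν) →
      (∃ τ, CovShape d L ρ τ ∧ CovShape d L ν τ) := by
    rintro ⟨σ, ⟨hσ, -, i, hiρ⟩, ⟨-, -, i', hiν⟩⟩
    have hnd : ¬ (d : ℤ) ∣ (i' - i) := fun h =>
      hne (by rw [hiρ, hiν, addCellAt_congr d i i' σ h])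
    refine ⟨fun j => max (ρ j) (ν j), ⟨hρ, shape_max d L ρ ν hρ hν, i', ?_⟩,
      hν, shape_max d L ρ ν hρ hν, i, ?_⟩ <;>
    · funext j
      have hρj := congrFun hiρ j
      have hνj := congrFun hiν j
      simp only [addCellAt] at hρj hνj ⊢
      by_cases h1 : (d : ℤ) ∣ (j - i)
      · have h2 : ¬ (d : ℤ) ∣ (j - i') := fun h2 => not_both_dvd d i i' j hnd h1 h2
        rw [if_pos h1] at hρj; rw [if_neg h2] at hνj
        simp only [if_pos h1, if_neg h2]; omega
      · rw [if_neg h1] at hρj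
        by_cases h2 : (d : ℤ) ∣ (j - i')
        · rw [if_pos h2] at hνj; simp only [if_neg h1, if_pos h2]; omega
        · rw [if_neg h2] at hνj; simp only [if_neg h1, if_neg h2]; omega
  -- existence of an upper cover gives existence of a lower cover
  have hdown : (∃ τ, CovShape d L ρ τ ∧ CovShape d L ν τ) →
      (∃ σ, CovShape d L σ ρ ∧ CovShape d L σ ν) := by
    rintro ⟨τ, ⟨-, -, i, hiρ⟩, ⟨-, -, i', hiν⟩⟩
    have hnd : ¬ (d : ℤ) ∣ (i' - i) := by
      intro h
      apply hne
      apply addCellAt_inj d i'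
      rw [← addCellAt_congr d i i' ρ h, ← hiρ, hiν]
    refine ⟨fun j => min (ρ j) (ν j), ⟨shape_min d L ρ ν hρ hν, hρ, i', ?_⟩,
      shape_min d L ρ ν hρ hν, hν, i, ?_⟩ <;>
    · funext j
      have hρj := congrFun hiρ j
      have hνj := congrFun hiν j
      simp only [addCellAt] at hρj hνj ⊢
      by_cases h1 : (d : ℤ) ∣ (j - i)
      · have h2 : ¬ (d : ℤ) ∣ (j - i') := fun h2 => not_both_dvd d i i' j hnd h1 h2
        rw [if_pos h1] at hρj; rw [if_neg h2] at hνj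
        simp only [if_pos h1, if_neg h2]; omega
      · rw [if_neg h1] at hρj
        by_cases h2 : (d : ℤ) ∣ (j - i')
        · rw [if_pos h2] at hνj; simp only [if_neg h1, if_pos h2]; omega
        · rw [if_neg h2] at hνj; simp only [if_neg h1, if_neg h2]; omega
  have hSsub : Subsingleton {σ : ℤ → ℤ // CovShape d L σ ρ ∧ CovShape d L σ ν} :=
    ⟨fun x y => Subtype.ext
      ((hmin x.1 x.2.1 x.2.2).trans (hmin y.1 y.2.1 y.2.2).symm)⟩
  have hTsub : Subsingleton {τ : ℤ → ℤ // CovShape d L ρ τ ∧ CovShape d L ν τ} :=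
    ⟨fun x y => Subtype.ext
      ((hmax x.1 x.2.1 x.2.2).trans (hmax y.1 y.2.1 y.2.2).symm)⟩
  have hiff : Nonempty {σ : ℤ → ℤ // CovShape d L σ ρ ∧ CovShape d L σ ν} ↔
      Nonempty {τ : ℤ → ℤ // CovShape d L ρ τ ∧ CovShape d L ν τ} := by
    rw [nonempty_subtype, nonempty_subtype]
    exact ⟨fun h => hup (by simpa using h), fun h => hdown (by simpa using h)⟩
  by_cases h : Nonempty {σ : ℤ → ℤ // CovShape d L σ ρ ∧ CovShape d L σ ν}
  · obtain ⟨x⟩ := h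
    obtain ⟨y⟩ := hiff.mp ⟨x⟩
    haveI := hSsub
    haveI := hTsub
    haveI : Unique {σ : ℤ → ℤ // CovShape d L σ ρ ∧ CovShape d L σ ν} :=
      uniqueOfSubsingleton x
    haveI : Unique {τ : ℤ → ℤ // CovShape d L ρ τ ∧ CovShape d L ν τ} :=
      uniqueOfSubsingleton y
    rw [Nat.card_unique, Nat.card_unique]
    exact ⟨rfl, le_refl 1⟩
  · have hT : ¬ Nonempty {τ : ℤ → ℤ // CovShape d L ρ τ ∧ CovShape d L ν τ} :=
      fun ht => h (hiff.mpr ht)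
    rw [not_nonempty_iff] at h hT
    rw [Nat.card_of_isEmpty, Nat.card_of_isEmpty]
    exact ⟨rfl, by norm_num⟩
end

section
/- The map g sending x = (x_1,...,x_d) ∈ Δ_{d,L} to the equivalence class (under cyclic rotation) of the binary word 0^{x_1}1 0^{x_2}1 ... 0^{x_d}1 is a surjection onto the set of necklaces of length d+L with d ones, and it is a bidirectional covering map from the simplex graph D_{d,L} to the necklace graph N_{d,L}: it restricts to a bijection between the out-neighbors of x and the out-neighbors of g(x), and between in-neighbors of x and in-neighbors of g(x). -/
/-- The simplex `Δ_{d,L}` viewed inside `ℤ^d`. -/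
def inSimplex (d L : ℕ) (x : Fin d → ℤ) : Prop :=
  (∀ j, 0 ≤ x j) ∧ ∑ j, x j = (L : ℤ)

/-- The step `s_i = e_{i+1} - e_i`, indices cyclic modulo `d`. -/
def step (d : ℕ) [NeZero d] (i : Fin d) : Fin d → ℤ :=
  fun j => (if j = i + 1 then 1 else 0) - (if j = i then 1 else 0)

/-- A word `u : ℤ → Bool` of period `N` (a cyclic binary word). -/
def IsPeriodicWord (N : ℕ) (u : ℤ → Bool) : Prop := ∀ r : ℤ, u (r + N) = u r

/-- Two periodic words represent the same necklace iff they differ by a rotation. -/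
def rotEquiv (u v : ℤ → Bool) : Prop := ∃ t : ℤ, ∀ r : ℤ, u r = v (r + t)

/-- The cyclic binary word `0^{x_1} 1 0^{x_2} 1 … 0^{x_d} 1` of period `d + L`:
position `r` carries a `1` iff `r` is congruent modulo `d+L` to
`x_1 + ⋯ + x_{i+1} + (i+1)` for some `i`. -/
def wordOf (d L : ℕ) (x : Fin d → ℤ) : ℤ → Bool :=
  fun r => decide (∃ i : Fin d, ((d + L : ℕ) : ℤ) ∣
    (r - ((∑ j ∈ Finset.univ.filter (fun j => j ≤ i), x j) + (i.val : ℤ) + 1)))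

/-- Replace the cyclic occurrence `01` of `u` at positions `(r-1, r)` by `10`. -/
def swap01 (N : ℕ) (u : ℤ → Bool) (r : ℤ) : ℤ → Bool :=
  fun r' => if (N : ℤ) ∣ (r' - (r - 1)) then true
    else if (N : ℤ) ∣ (r' - r) then false else u r'

/-- Replace the cyclic occurrence `10` of `u` at positions `(r-1, r)` by `01`. -/
def swap10 (N : ℕ) (u : ℤ → Bool) (r : ℤ) : ℤ → Bool :=
  fun r' => if (N : ℤ) ∣ (r' - (r - 1)) then false
    else if (N : ℤ) ∣ (r' - r) then true else u r'

/-- Representatives in `[1, N]` of the cyclic occurrences of `01` in `u`. -/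
noncomputable def occ01 (N : ℕ) (u : ℤ → Bool) : Finset ℤ :=
  (Finset.Icc (1 : ℤ) (N : ℤ)).filter (fun r => u (r - 1) = false ∧ u r = true)

/-- Representatives in `[1, N]` of the cyclic occurrences of `10` in `u`. -/
noncomputable def occ10 (N : ℕ) (u : ℤ → Bool) : Finset ℤ :=
  (Finset.Icc (1 : ℤ) (N : ℤ)).filter (fun r => u (r - 1) = true ∧ u r = false)

set_option linter.unusedSectionVars false
set_option maxHeartbeats 1000000

namespace S12


def posn {d : ℕ} (x : Fin d → ℤ) (i : Fin d) : ℤ :=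
  (∑ j ∈ Finset.univ.filter (fun j => j ≤ i), x j) + (i.val : ℤ) + 1

lemma word_iff {d L : ℕ} (x : Fin d → ℤ) (r : ℤ) :
    wordOf d L x r = true ↔ ∃ i, ((d + L : ℕ) : ℤ) ∣ (r - posn x i) := by
  simp [wordOf, posn]

def lastF (d : ℕ) [NeZero d] : Fin d := ⟨d - 1, by have := NeZero.pos d; omega⟩

variable {d L : ℕ} [NeZero d] {x : Fin d → ℤ}

lemma Ssum_nonneg (hx : inSimplex d L x) (i : Fin d) :
    0 ≤ ∑ j ∈ Finset.univ.filter (fun j => j ≤ i), x j :=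
  Finset.sum_nonneg fun j _ => hx.1 j

lemma Ssum_le (hx : inSimplex d L x) (i : Fin d) :
    ∑ j ∈ Finset.univ.filter (fun j => j ≤ i), x j ≤ (L : ℤ) := by
  rw [← hx.2]
  exact Finset.sum_le_sum_of_subset_of_nonneg (Finset.filter_subset _ _)
    (fun j _ _ => hx.1 j)

lemma Ssum_mono (hx : inSimplex d L x) {i j : Fin d} (hij : i ≤ j) :
    ∑ k ∈ Finset.univ.filter (fun k => k ≤ i), x k ≤
      ∑ k ∈ Finset.univ.filter (fun k => k ≤ j), x k :=
  Finset.sum_le_sum_of_subset_of_nonneg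
    (by intro k hk; simp only [Finset.mem_filter] at *; exact ⟨hk.1, le_trans hk.2 hij⟩)
    (fun k _ _ => hx.1 k)

lemma posn_pos (hx : inSimplex d L x) (i : Fin d) : 1 ≤ posn x i := by
  have h1 := Ssum_nonneg hx i
  have h2 : (0:ℤ) ≤ (i.val : ℤ) := Int.ofNat_nonneg _
  unfold posn; linarith

lemma posn_le (hx : inSimplex d L x) (i : Fin d) : posn x i ≤ ((d + L : ℕ) : ℤ) := by
  have h1 := Ssum_le hx i
  have h2 : (i.val : ℤ) ≤ (d : ℤ) - 1 := by have := i.2; omega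
  unfold posn; push_cast; linarith

lemma posn_strictMono (hx : inSimplex d L x) {i j : Fin d} (hij : i < j) :
    posn x i < posn x j := by
  have h1 := Ssum_mono hx (le_of_lt hij)
  have h2 : (i.val : ℤ) < (j.val : ℤ) := by exact_mod_cast hij
  unfold posn; linarith

lemma filter_le_lastF : Finset.univ.filter (fun j => j ≤ lastF d) = (Finset.univ : Finset (Fin d)) := by
  ext k; simp only [Finset.mem_filter, Finset.mem_univ, true_and, Fin.le_def, lastF]
  exact iff_of_true (by have := k.2; omega) trivial

lemma posn_lastF (hx : inSimplex d L x) : posn x (lastF d) = ((d + L : ℕ) : ℤ) := by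
  unfold posn
  rw [filter_le_lastF, hx.2]
  have := NeZero.pos d
  simp [lastF]; push_cast; omega

lemma posn_lt_of_ne_lastF (hx : inSimplex d L x) {i : Fin d} (hi : i ≠ lastF d) :
    posn x i < ((d + L : ℕ) : ℤ) := by
  have : i < lastF d := by
    rw [Fin.lt_def]; have := i.2; have h2 : i.val ≠ d - 1 := fun h => hi (Fin.ext h)
    simp only [lastF]; omega
  calc posn x i < posn x (lastF d) := posn_strictMono hx this
    _ = _ := posn_lastF hx

lemma posn_injective (hx : inSimplex d L x) : Function.Injective (posn x) := by
  intro i j h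
  rcases lt_trichotomy i j with h1 | h1 | h1
  · exact absurd h (ne_of_lt (posn_strictMono hx h1))
  · exact h1
  · exact absurd h.symm (ne_of_lt (posn_strictMono hx h1))

lemma eq_of_dvd_Icc (hN : 0 < ((d + L : ℕ) : ℤ)) {a b : ℤ}
    (ha : 1 ≤ a) (haN : a ≤ ((d + L : ℕ) : ℤ)) (hb : 1 ≤ b) (hbN : b ≤ ((d + L : ℕ) : ℤ))
    (h : ((d + L : ℕ) : ℤ) ∣ a - b) : a = b := by
  have := Int.eq_zero_of_abs_lt_dvd h (abs_lt.mpr ⟨by omega, by omega⟩)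
  omega

lemma Ssum_succ {i j : Fin d} (hij : j.val + 1 = i.val) :
    ∑ k ∈ Finset.univ.filter (fun k => k ≤ i), x k =
      (∑ k ∈ Finset.univ.filter (fun k => k ≤ j), x k) + x i := by
  have hset : Finset.univ.filter (fun k => k ≤ i) =
      insert i (Finset.univ.filter (fun k => k ≤ j)) := by
    ext k
    simp only [Finset.mem_filter, Finset.mem_univ, true_and, Fin.le_def, Finset.mem_insert,
      Fin.ext_iff, Finset.mem_singleton]
    have := k.2; omega
  rw [hset, Finset.sum_insert (by simp only [Finset.mem_filter, Finset.mem_univ, true_and, Fin.le_def]; omega)]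
  ring

lemma diff_one (hx : inSimplex d L x) {i j : Fin d} (hij : j < i)
    (h : posn x i - posn x j = 1) : j.val + 1 = i.val ∧ x i = 0 := by
  have h1 := Ssum_mono hx (le_of_lt hij)
  have h2 : (j.val : ℤ) < (i.val : ℤ) := by exact_mod_cast hij
  have hv : j.val + 1 = i.val := by unfold posn at h; omega
  have := Ssum_succ (x := x) hv
  have hxi := hx.1 i
  constructor
  · exact hv
  · unfold posn at h; omega

lemma posn_eq_one (hx : inSimplex d L x) {i : Fin d} (h : posn x i = 1) :
    i.val = 0 ∧ x i = 0 := by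
  have h1 := Ssum_nonneg hx i
  have hv : i.val = 0 := by unfold posn at h; omega
  have hS : ∑ k ∈ Finset.univ.filter (fun k => k ≤ i), x k = 0 := by
    unfold posn at h; omega
  have hset : Finset.univ.filter (fun k => k ≤ i) = {i} := by
    ext k
    simp only [Finset.mem_filter, Finset.mem_univ, true_and, Fin.le_def, Finset.mem_insert,
      Fin.ext_iff, Finset.mem_singleton]
    have := k.2; omega
  rw [hset, Finset.sum_singleton] at hS
  exact ⟨hv, hS⟩

lemma posn_zero_eq_one {i : Fin d} (hv : i.val = 0) (hxi : x i = 0) :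
    posn x i = 1 := by
  have hset : Finset.univ.filter (fun k => k ≤ i) = {i} := by
    ext k
    simp only [Finset.mem_filter, Finset.mem_univ, true_and, Fin.le_def, Finset.mem_insert,
      Fin.ext_iff, Finset.mem_singleton]
    have := k.2; omega
  unfold posn; rw [hset, Finset.sum_singleton, hxi, hv]; ring




lemma lastF_val : (lastF d).val = d - 1 := rfl

lemma val_add_one (i : Fin d) :
    ((i + 1 : Fin d)).val = if i.val = d - 1 then 0 else i.val + 1 := by
  have hd : 0 < d := Nat.pos_of_ne_zero (NeZero.ne d)
  have h2 := i.2
  have key : ((i + 1 : Fin d)).val = (i.val + 1 % d) % d := by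
    rw [Fin.add_def, Fin.val_one']
  rcases eq_or_lt_of_le (show 1 ≤ d from hd) with h1 | h1
  · have hd1 : d = 1 := h1.symm
    subst hd1
    have hi0 : i.val = 0 := by omega
    rw [key]; simp [hi0]
  · have hone : 1 % d = 1 := Nat.mod_eq_of_lt h1
    rw [key, hone]
    split_ifs with h
    · have hh : i.val + 1 = d := by omega
      rw [hh, Nat.mod_self]
    · exact Nat.mod_eq_of_lt (by omega)

lemma val_add_one_of_ne {i : Fin d} (hi : i ≠ lastF d) :
    ((i + 1 : Fin d)).val = i.val + 1 := by
  rw [val_add_one]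
  have : i.val ≠ d - 1 := fun h => hi (Fin.ext h)
  simp [this]

lemma lastF_add_one_val : ((lastF d + 1 : Fin d)).val = 0 := by
  rw [val_add_one, lastF_val]
  simp

lemma lastF_add_one : (lastF d + 1 : Fin d) = ⟨0, NeZero.pos d⟩ :=
  Fin.ext lastF_add_one_val

lemma Ssum_add_step (i j : Fin d) :
    ∑ k ∈ Finset.univ.filter (fun k => k ≤ j), (x + step d i) k
      = (∑ k ∈ Finset.univ.filter (fun k => k ≤ j), x k)
        + (if i + 1 ≤ j then 1 else 0) - (if i ≤ j then 1 else 0) := by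
  simp only [Pi.add_apply, step]
  rw [Finset.sum_add_distrib, Finset.sum_sub_distrib]
  rw [Finset.sum_ite_eq' _ (i+1) (fun _ => (1:ℤ)), Finset.sum_ite_eq' _ i (fun _ => (1:ℤ))]
  simp only [Finset.mem_filter, Finset.mem_univ, true_and]
  ring

lemma Ssum_sub_step (i j : Fin d) :
    ∑ k ∈ Finset.univ.filter (fun k => k ≤ j), (x - step d i) k
      = (∑ k ∈ Finset.univ.filter (fun k => k ≤ j), x k)
        - (if i + 1 ≤ j then 1 else 0) + (if i ≤ j then 1 else 0) := by
  simp only [Pi.sub_apply, step]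
  rw [Finset.sum_sub_distrib, Finset.sum_sub_distrib]
  rw [Finset.sum_ite_eq' _ (i+1) (fun _ => (1:ℤ)), Finset.sum_ite_eq' _ i (fun _ => (1:ℤ))]
  simp only [Finset.mem_filter, Finset.mem_univ, true_and]
  ring


lemma posn_add_ne {i : Fin d} (hi : i ≠ lastF d) (j : Fin d) :
    posn (x + step d i) j = posn x j - (if j = i then 1 else 0) := by
  unfold posn
  rw [Ssum_add_step]
  have h1 := val_add_one_of_ne hi
  simp only [Fin.le_def, Fin.ext_iff, h1]
  split_ifs <;> omega

lemma posn_add_last (j : Fin d) :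
    posn (x + step d (lastF d)) j = posn x j + 1 - (if j = lastF d then 1 else 0) := by
  unfold posn
  rw [Ssum_add_step]
  have h2 := j.2
  simp only [Fin.le_def, Fin.ext_iff, lastF_add_one_val, lastF_val]
  split_ifs <;> omega

lemma posn_sub_ne {i : Fin d} (hi : i ≠ lastF d) (j : Fin d) :
    posn (x - step d i) j = posn x j + (if j = i then 1 else 0) := by
  unfold posn
  rw [Ssum_sub_step]
  have h1 := val_add_one_of_ne hi
  simp only [Fin.le_def, Fin.ext_iff, h1]
  split_ifs <;> omega

lemma posn_sub_last (j : Fin d) :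
    posn (x - step d (lastF d)) j = posn x j - 1 + (if j = lastF d then 1 else 0) := by
  unfold posn
  rw [Ssum_sub_step]
  have h2 := j.2
  simp only [Fin.le_def, Fin.ext_iff, lastF_add_one_val, lastF_val]
  split_ifs <;> omega

lemma bool_eq_of_iff {a b : Bool} (h : (a = true) ↔ (b = true)) : a = b := by
  cases a <;> cases b <;> simp_all


lemma dvd_cases {NN : ℤ} (hNN : 0 < NN) {z : ℤ} (h : NN ∣ z) (h1 : -NN ≤ z) (h2 : z ≤ NN) :
    z = -NN ∨ z = 0 ∨ z = NN := by
  rcases h with ⟨k, rfl⟩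
  have hk1 : -1 ≤ k := by
    by_contra hc; push_neg at hc
    nlinarith [mul_pos hNN (by linarith : (0:ℤ) < -k - 1)]
  have hk2 : k ≤ 1 := by
    by_contra hc; push_neg at hc
    nlinarith [mul_pos hNN (by linarith : (0:ℤ) < k - 1)]
  have hk : k = -1 ∨ k = 0 ∨ k = 1 := by omega
  rcases hk with rfl | rfl | rfl
  · left; ring
  · right; left; ring
  · right; right; ring

lemma NZ_pos (hL : 1 ≤ L) : (0:ℤ) < ((d + L : ℕ) : ℤ) := by
  have := Nat.pos_of_ne_zero (NeZero.ne d); push_cast; omega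

lemma NZ_two (hL : 1 ≤ L) : (2:ℤ) ≤ ((d + L : ℕ) : ℤ) := by
  have := Nat.pos_of_ne_zero (NeZero.ne d); push_cast; omega

lemma lt_of_posn_lt (hx : inSimplex d L x) {i j : Fin d} (h : posn x j < posn x i) : j < i := by
  rcases lt_trichotomy i j with h1 | h1 | h1
  · have := posn_strictMono hx h1; omega
  · subst h1; omega
  · exact h1

lemma posn_succ {i j : Fin d} (hij : j.val + 1 = i.val) (hxi : x i = 0) :
    posn x i = posn x j + 1 := by
  have hS := Ssum_succ (x := x) (i := i) (j := j) hij
  have hc : (i.val : ℤ) = (j.val : ℤ) + 1 := by omega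
  unfold posn; rw [hS, hxi, hc]; ring

lemma mem_occ01 (hx : inSimplex d L x) (hL : 1 ≤ L) {i : Fin d} (hi : 0 < x i) :
    posn x i ∈ occ01 (d + L) (wordOf d L x) := by
  have hNpos := NZ_pos (d := d) hL
  have hpi1 := posn_pos hx i; have hpi2 := posn_le hx i
  rw [occ01, Finset.mem_filter, Finset.mem_Icc]
  refine ⟨⟨hpi1, hpi2⟩, ?_, (word_iff x _).mpr ⟨i, by simp⟩⟩
  rw [Bool.eq_false_iff, Ne, word_iff]
  rintro ⟨j, hj⟩
  have hpj1 := posn_pos hx j; have hpj2 := posn_le hx j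
  rcases dvd_cases hNpos hj (by omega) (by omega) with hz | hz | hz
  · have h1 : posn x i = 1 := by omega
    have := (posn_eq_one hx h1).2; omega
  · have hji : j < i := lt_of_posn_lt hx (by omega)
    have := (diff_one hx hji (by omega)).2; omega
  · omega

lemma occ01_exists (hx : inSimplex d L x) (hL : 1 ≤ L) {r : ℤ}
    (hr : r ∈ occ01 (d + L) (wordOf d L x)) : ∃ i : Fin d, 0 < x i ∧ posn x i = r := by
  have hNpos := NZ_pos (d := d) hL
  rw [occ01, Finset.mem_filter, Finset.mem_Icc] at hr
  obtain ⟨⟨hr1, hr2⟩, hf, ht⟩ := hr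
  obtain ⟨j, hj⟩ := (word_iff x r).mp ht
  have hpj1 := posn_pos hx j; have hpj2 := posn_le hx j
  have hrp : r = posn x j := eq_of_dvd_Icc hNpos hr1 hr2 hpj1 hpj2 hj
  refine ⟨j, ?_, hrp.symm⟩
  by_contra hxj
  have hxj0 : x j = 0 := le_antisymm (not_lt.mp hxj) (hx.1 j)
  by_cases hjv : j.val = 0
  · have h1 : posn x j = 1 := posn_zero_eq_one hjv hxj0
    have hw : wordOf d L x (r - 1) = true := (word_iff x _).mpr ⟨lastF d, by
      rw [posn_lastF hx, hrp, h1]; exact ⟨-1, by ring⟩⟩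
    rw [hf] at hw; exact Bool.false_ne_true hw
  · have hj2 := j.2
    set j' : Fin d := ⟨j.val - 1, by omega⟩ with hj'def
    have hsucc : j'.val + 1 = j.val := by simp only [hj'def]; omega
    have hps : posn x j = posn x j' + 1 := posn_succ hsucc hxj0
    have hw : wordOf d L x (r - 1) = true := (word_iff x _).mpr ⟨j', by
      have he : r - 1 - posn x j' = r - posn x j := by rw [hps]; ring
      rw [he]; exact hj⟩
    rw [hf] at hw; exact Bool.false_ne_true hw

lemma posn_eq_lastF (hx : inSimplex d L x) {j : Fin d} (h : posn x j = ((d + L : ℕ) : ℤ)) :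
    j = lastF d := by
  by_contra hc
  have := posn_lt_of_ne_lastF hx hc; omega

lemma zeroF_eq_lastF_add_one : (⟨0, Nat.pos_of_ne_zero (NeZero.ne d)⟩ : Fin d) = lastF d + 1 :=
  (lastF_add_one).symm

lemma mem_occ10 (hx : inSimplex d L x) (hL : 1 ≤ L) {i : Fin d} (hi : 0 < x (i + 1)) :
    (if i = lastF d then 1 else posn x i + 1) ∈ occ10 (d + L) (wordOf d L x) := by
  have hNpos := NZ_pos (d := d) hL
  have hN2 := NZ_two (d := d) hL
  rw [occ10, Finset.mem_filter, Finset.mem_Icc]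
  by_cases hil : i = lastF d
  · subst hil
    rw [if_pos rfl]
    refine ⟨⟨le_refl _, by omega⟩, ?_, ?_⟩
    · refine (word_iff x _).mpr ⟨lastF d, ?_⟩
      rw [posn_lastF hx]
      exact ⟨-1, by ring⟩
    · rw [Bool.eq_false_iff, Ne, word_iff]
      rintro ⟨j, hj⟩
      have hpj1 := posn_pos hx j; have hpj2 := posn_le hx j
      rcases dvd_cases hNpos hj (by omega) (by omega) with hz | hz | hz
      · omega
      · have h1 : posn x j = 1 := by omega
        obtain ⟨hjv, hxj⟩ := posn_eq_one hx h1
        have : j = lastF d + 1 := by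
          rw [← zeroF_eq_lastF_add_one]; exact Fin.ext hjv
        rw [this] at hxj; omega
      · omega
  · rw [if_neg hil]
    have hpi1 := posn_pos hx i; have hpiN := posn_lt_of_ne_lastF hx hil
    refine ⟨⟨by omega, by omega⟩, ?_, ?_⟩
    · refine (word_iff x _).mpr ⟨i, ?_⟩
      simp
    · rw [Bool.eq_false_iff, Ne, word_iff]
      rintro ⟨j, hj⟩
      have hpj1 := posn_pos hx j; have hpj2 := posn_le hx j
      rcases dvd_cases hNpos hj (by omega) (by omega) with hz | hz | hz
      · omega
      · have hij : i < j := lt_of_posn_lt hx (by omega)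
        obtain ⟨hv, hxj⟩ := diff_one hx hij (by omega)
        have : j = i + 1 := Fin.ext (by rw [val_add_one_of_ne hil]; omega)
        rw [this] at hxj; omega
      · omega

lemma occ10_exists (hx : inSimplex d L x) (hL : 1 ≤ L) {r : ℤ}
    (hr : r ∈ occ10 (d + L) (wordOf d L x)) :
    ∃ i : Fin d, 0 < x (i + 1) ∧ (if i = lastF d then 1 else posn x i + 1) = r := by
  have hNpos := NZ_pos (d := d) hL
  rw [occ10, Finset.mem_filter, Finset.mem_Icc] at hr
  obtain ⟨⟨hr1, hr2⟩, ht, hf⟩ := hr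
  obtain ⟨j, hj⟩ := (word_iff x (r - 1)).mp ht
  have hpj1 := posn_pos hx j; have hpj2 := posn_le hx j
  rcases dvd_cases hNpos hj (by omega) (by omega) with hz | hz | hz
  · -- r = 1, posn x j = N, j = lastF
    have hrr : r = 1 := by omega
    have hjl : j = lastF d := posn_eq_lastF hx (by omega)
    refine ⟨lastF d, ?_, by rw [if_pos rfl, hrr]⟩
    by_contra hc
    have hx0 : x (lastF d + 1) = 0 := le_antisymm (not_lt.mp hc) (hx.1 _)
    rw [← zeroF_eq_lastF_add_one] at hx0
    have h1 : posn x ⟨0, Nat.pos_of_ne_zero (NeZero.ne d)⟩ = 1 := posn_zero_eq_one rfl hx0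
    have hw : wordOf d L x r = true := (word_iff x _).mpr
      ⟨⟨0, Nat.pos_of_ne_zero (NeZero.ne d)⟩, by rw [h1, hrr]; simp⟩
    rw [hf] at hw; exact Bool.false_ne_true hw
  · -- r = posn x j + 1
    have hrr : r = posn x j + 1 := by omega
    have hjl : j ≠ lastF d := by
      intro hc; rw [hc, posn_lastF hx] at hrr; omega
    refine ⟨j, ?_, by rw [if_neg hjl, hrr]⟩
    by_contra hc
    have hx0 : x (j + 1) = 0 := le_antisymm (not_lt.mp hc) (hx.1 _)
    have hsucc : j.val + 1 = (j + 1 : Fin d).val := (val_add_one_of_ne hjl).symm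
    have hps : posn x (j + 1) = posn x j + 1 := posn_succ hsucc hx0
    have hw : wordOf d L x r = true := (word_iff x _).mpr ⟨j + 1, by rw [hps, hrr]; simp⟩
    rw [hf] at hw; exact Bool.false_ne_true hw
  · omega

lemma dvd_of_dvd_of_eq {NN a b : ℤ} (h : NN ∣ a) (e : b = a) : NN ∣ b := e ▸ h

lemma rot01 (hx : inSimplex d L x) (hL : 1 ≤ L) (i : Fin d) :
    rotEquiv (wordOf d L (x + step d i)) (swap01 (d + L) (wordOf d L x) (posn x i)) := by
  have hNpos := NZ_pos (d := d) hL
  have hN2 := NZ_two (d := d) hL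
  by_cases hi : i = lastF d
  · subst hi
    have hpl := posn_lastF hx
    refine ⟨-1, fun r => ?_⟩
    apply bool_eq_of_iff
    rw [word_iff]
    simp only [posn_add_last]
    unfold swap01
    split_ifs with h1 h2
    · exact iff_of_true ⟨lastF d, by rw [if_pos rfl]; exact dvd_of_dvd_of_eq h1 (by ring)⟩ rfl
    · refine iff_of_false ?_ (by simp)
      rintro ⟨j, hj⟩
      by_cases hjl : j = lastF d
      · subst hjl; rw [if_pos rfl] at hj
        exact h1 (dvd_of_dvd_of_eq hj (by ring))
      · rw [if_neg hjl] at hj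
        exact hjl (posn_injective hx (eq_of_dvd_Icc hNpos (posn_pos hx j) (posn_le hx j)
          (posn_pos hx _) (posn_le hx _)
          (dvd_of_dvd_of_eq (dvd_sub h2 hj) (by rw [hpl]; ring))))
    · rw [word_iff]
      constructor
      · rintro ⟨j, hj⟩
        by_cases hjl : j = lastF d
        · subst hjl; rw [if_pos rfl] at hj
          exact absurd (dvd_of_dvd_of_eq hj (by ring)) h1
        · rw [if_neg hjl] at hj
          exact ⟨j, dvd_of_dvd_of_eq hj (by ring)⟩
      · rintro ⟨j, hj⟩
        by_cases hjl : j = lastF d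
        · subst hjl; exact absurd hj h2
        · exact ⟨j, by rw [if_neg hjl]; exact dvd_of_dvd_of_eq hj (by ring)⟩
  · refine ⟨0, fun r => ?_⟩
    apply bool_eq_of_iff
    rw [word_iff]
    simp only [posn_add_ne hi]
    unfold swap01
    split_ifs with h1 h2
    · exact iff_of_true ⟨i, by rw [if_pos rfl]; exact dvd_of_dvd_of_eq h1 (by ring)⟩ rfl
    · refine iff_of_false ?_ (by simp)
      rintro ⟨j, hj⟩
      by_cases hji : j = i
      · subst hji; rw [if_pos rfl] at hj
        exact h1 (dvd_of_dvd_of_eq hj (by ring))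
      · rw [if_neg hji] at hj
        exact hji (posn_injective hx (eq_of_dvd_Icc hNpos (posn_pos hx j) (posn_le hx j)
          (posn_pos hx i) (posn_le hx i) (dvd_of_dvd_of_eq (dvd_sub h2 hj) (by ring))))
    · rw [word_iff]
      constructor
      · rintro ⟨j, hj⟩
        by_cases hji : j = i
        · subst hji; rw [if_pos rfl] at hj
          exact absurd (dvd_of_dvd_of_eq hj (by ring)) h1
        · rw [if_neg hji] at hj
          exact ⟨j, dvd_of_dvd_of_eq hj (by ring)⟩
      · rintro ⟨j, hj⟩
        by_cases hji : j = i
        · subst hji; exact absurd (dvd_of_dvd_of_eq hj (by ring)) h2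
        · exact ⟨j, by rw [if_neg hji]; exact dvd_of_dvd_of_eq hj (by ring)⟩

lemma rot10 (hx : inSimplex d L x) (hL : 1 ≤ L) (i : Fin d) :
    rotEquiv (wordOf d L (x - step d i))
      (swap10 (d + L) (wordOf d L x) (if i = lastF d then 1 else posn x i + 1)) := by
  have hNpos := NZ_pos (d := d) hL
  have hN2 := NZ_two (d := d) hL
  by_cases hi : i = lastF d
  · subst hi
    have hpl := posn_lastF hx
    rw [if_pos rfl]
    refine ⟨1, fun r => ?_⟩
    apply bool_eq_of_iff
    rw [word_iff]
    simp only [posn_sub_last]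
    unfold swap10
    split_ifs with h1 h2
    · refine iff_of_false ?_ (by simp)
      rintro ⟨j, hj⟩
      by_cases hjl : j = lastF d
      · subst hjl; rw [if_pos rfl] at hj
        have hone : ((d + L : ℕ) : ℤ) ∣ 1 := by
          have := dvd_sub h1 hj
          have h3 := dvd_sub this (dvd_refl ((d + L : ℕ) : ℤ))
          exact dvd_of_dvd_of_eq h3 (by rw [hpl]; ring)
        have := Int.le_of_dvd (by omega) hone; omega
      · rw [if_neg hjl] at hj
        have hpj1 := posn_pos hx j; have hpjN := posn_lt_of_ne_lastF hx hjl
        have hpj : ((d + L : ℕ) : ℤ) ∣ posn x j :=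
          dvd_of_dvd_of_eq (dvd_sub h1 hj) (by ring)
        have := Int.eq_zero_of_abs_lt_dvd hpj (abs_lt.mpr ⟨by omega, by omega⟩)
        omega
    · refine iff_of_true ⟨lastF d, ?_⟩ rfl
      rw [if_pos rfl]
      refine dvd_of_dvd_of_eq (dvd_sub h2 (dvd_refl ((d + L : ℕ) : ℤ))) (by rw [hpl]; ring)
    · rw [word_iff]
      constructor
      · rintro ⟨j, hj⟩
        by_cases hjl : j = lastF d
        · subst hjl; rw [if_pos rfl] at hj
          refine absurd (dvd_of_dvd_of_eq (dvd_add hj (dvd_refl ((d + L : ℕ) : ℤ))) ?_) h2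
          rw [hpl]; ring
        · rw [if_neg hjl] at hj
          exact ⟨j, dvd_of_dvd_of_eq hj (by ring)⟩
      · rintro ⟨j, hj⟩
        by_cases hjl : j = lastF d
        · subst hjl; rw [hpl] at hj
          exact absurd (dvd_of_dvd_of_eq (dvd_add hj (dvd_refl ((d + L : ℕ) : ℤ))) (by ring)) h1
        · exact ⟨j, by rw [if_neg hjl]; exact dvd_of_dvd_of_eq hj (by ring)⟩
  · rw [if_neg hi]
    refine ⟨0, fun r => ?_⟩
    apply bool_eq_of_iff
    rw [word_iff]
    simp only [posn_sub_ne hi]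
    unfold swap10
    split_ifs with h1 h2
    · refine iff_of_false ?_ (by simp)
      rintro ⟨j, hj⟩
      by_cases hji : j = i
      · subst hji; rw [if_pos rfl] at hj
        have hone : ((d + L : ℕ) : ℤ) ∣ 1 := dvd_of_dvd_of_eq (dvd_sub h1 hj) (by ring)
        have := Int.le_of_dvd (by omega) hone; omega
      · rw [if_neg hji] at hj
        exact hji (posn_injective hx (eq_of_dvd_Icc hNpos (posn_pos hx j) (posn_le hx j)
          (posn_pos hx i) (posn_le hx i) (dvd_of_dvd_of_eq (dvd_sub h1 hj) (by ring))))
    · exact iff_of_true ⟨i, by rw [if_pos rfl]; exact dvd_of_dvd_of_eq h2 (by ring)⟩ rfl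
    · rw [word_iff]
      constructor
      · rintro ⟨j, hj⟩
        by_cases hji : j = i
        · subst hji; rw [if_pos rfl] at hj
          exact absurd (dvd_of_dvd_of_eq hj (by ring)) h2
        · rw [if_neg hji] at hj
          exact ⟨j, dvd_of_dvd_of_eq hj (by ring)⟩
      · rintro ⟨j, hj⟩
        by_cases hji : j = i
        · subst hji; exact absurd (dvd_of_dvd_of_eq hj (by ring)) h1
        · exact ⟨j, by rw [if_neg hji]; exact dvd_of_dvd_of_eq hj (by ring)⟩

lemma periodic_congr {N : ℕ} {u : ℤ → Bool} (hu : IsPeriodicWord N u) {s s' : ℤ}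
    (h : (N : ℤ) ∣ s - s') : u s = u s' := by
  obtain ⟨k, hk⟩ := h
  have key : ∀ m : ℤ, u (s' + m * N) = u s' := by
    intro m
    induction m using Int.induction_on with
    | zero => simp
    | succ n ih =>
      have h2 := hu (s' + (n : ℤ) * N)
      rw [show s' + ((n : ℤ) + 1) * (N : ℤ) = s' + (n : ℤ) * N + N by ring, h2]
      exact ih
    | pred n ih =>
      have h2 := hu (s' + (-(n : ℤ) - 1) * N)
      rw [show s' + (-(n : ℤ) - 1) * (N : ℤ) + (N : ℤ) = s' + (-(n : ℤ)) * N by ring] at h2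
      rw [← h2]
      exact ih
  have hs : s = s' + k * N := by linear_combination hk
  rw [hs]; exact key k

lemma posn_val_zero {i : Fin d} (hv : i.val = 0) : posn x i = x i + 1 := by
  have hset : Finset.univ.filter (fun k => k ≤ i) = {i} := by
    ext k
    simp only [Finset.mem_filter, Finset.mem_univ, true_and, Fin.le_def, Finset.mem_singleton,
      Fin.ext_iff]
    have := k.2; omega
  unfold posn; rw [hset, Finset.sum_singleton, hv]; ring

lemma surj_part (hL : 1 ≤ L) (u : ℤ → Bool) (hu : IsPeriodicWord (d + L) u)
    (hcard : ((Finset.Icc (1 : ℤ) ((d + L : ℕ) : ℤ)).filter (fun r => u r = true)).card = d) :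
    ∃ x : Fin d → ℤ, inSimplex d L x ∧ rotEquiv (wordOf d L x) u := by
  have hd : 0 < d := Nat.pos_of_ne_zero (NeZero.ne d)
  have hNpos := NZ_pos (d := d) hL
  let q := ((Finset.Icc (1 : ℤ) ((d + L : ℕ) : ℤ)).filter (fun r => u r = true)).orderIsoOfFin hcard
  let Q : Fin d → ℤ := fun i => (q i : ℤ)
  have hQprop : ∀ i, (1 ≤ Q i ∧ Q i ≤ ((d + L : ℕ) : ℤ)) ∧ u (Q i) = true := by
    intro i
    have hm : (q i : ℤ) ∈ (Finset.Icc (1 : ℤ) ((d + L : ℕ) : ℤ)).filter (fun r => u r = true) :=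
      (q i).2
    rw [Finset.mem_filter, Finset.mem_Icc] at hm
    exact hm
  have hQmono : ∀ {i j : Fin d}, i < j → Q i < Q j := by
    intro i j h
    exact_mod_cast Subtype.coe_lt_coe.mpr (q.strictMono h)
  set t : ℤ := Q (lastF d) - ((d + L : ℕ) : ℤ) with ht
  have htle : t ≤ 0 := by have := (hQprop (lastF d)).1.2; omega
  set x : Fin d → ℤ := fun i =>
    if h : i.val = 0 then Q i - t - 1
    else Q i - Q ⟨i.val - 1, by have := i.2; omega⟩ - 1 with hxdef
  have hQle : ∀ i : Fin d, i ≠ lastF d → Q i < Q (lastF d) := by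
    intro i hi
    refine hQmono ?_
    rw [Fin.lt_def]
    have h2 := i.2
    have : i.val ≠ d - 1 := fun h => hi (Fin.ext h)
    simp only [lastF]; omega
  have hxnn : ∀ i, 0 ≤ x i := by
    intro i
    rw [hxdef]
    dsimp only
    by_cases h : i.val = 0
    · rw [dif_pos h]
      have h1 := (hQprop i).1.1
      linarith
    · rw [dif_neg h]
      have hlt : (⟨i.val - 1, by have := i.2; omega⟩ : Fin d) < i := by
        rw [Fin.lt_def]; show i.val - 1 < i.val; omega
      have := hQmono hlt
      linarith
  have hposn : ∀ i : Fin d, posn x i = Q i - t := by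
    have key : ∀ k (hk : k < d), posn x ⟨k, hk⟩ = Q ⟨k, hk⟩ - t := by
      intro k
      induction k with
      | zero =>
        intro hk
        rw [posn_val_zero rfl, hxdef]
        dsimp only
        rw [dif_pos rfl]
        ring
      | succ n ih =>
        intro hk
        have hn : n < d := by omega
        have hS := Ssum_succ (x := x) (i := (⟨n + 1, hk⟩ : Fin d)) (j := (⟨n, hn⟩ : Fin d)) rfl
        have hxv : x ⟨n + 1, hk⟩ = Q ⟨n + 1, hk⟩ - Q ⟨n, hn⟩ - 1 := by
          rw [hxdef]
          dsimp only
          rw [dif_neg (by omega : ¬ (n + 1 = 0))]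
          simp only [Nat.add_sub_cancel]
        have ihn := ih hn
        unfold posn at ihn ⊢
        rw [hS, hxv]
        push_cast
        push_cast at ihn
        linarith
    intro i
    have := key i.val i.2
    rwa [Fin.eta] at this
  have hsum : ∑ j, x j = (L : ℤ) := by
    have h1 : ∑ j, x j = ∑ j ∈ Finset.univ.filter (fun j => j ≤ lastF d), x j := by
      rw [filter_le_lastF]
    have h2 := hposn (lastF d)
    unfold posn at h2
    rw [h1]
    have h3 : ((lastF d).val : ℤ) = (d : ℤ) - 1 := by
      simp only [lastF_val]; push_cast; omega
    rw [h3] at h2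
    rw [ht] at h2
    push_cast at h2 ⊢
    linarith
  refine ⟨x, ⟨hxnn, hsum⟩, t, fun r => ?_⟩
  have hchar : ∀ s : ℤ, u s = true ↔ ∃ i, ((d + L : ℕ) : ℤ) ∣ s - Q i := by
    intro s
    constructor
    · intro hs
      set v := (s - 1) % ((d + L : ℕ) : ℤ) + 1 with hv
      have h1 : 0 ≤ (s - 1) % ((d + L : ℕ) : ℤ) := Int.emod_nonneg _ (by omega)
      have h2 : (s - 1) % ((d + L : ℕ) : ℤ) < ((d + L : ℕ) : ℤ) :=
        Int.emod_lt_of_pos _ hNpos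
      have hdvd : ((d + L : ℕ) : ℤ) ∣ s - v := by
        refine ⟨(s - 1) / ((d + L : ℕ) : ℤ), ?_⟩
        have h3 := Int.mul_ediv_add_emod (s - 1) ((d + L : ℕ) : ℤ)
        rw [hv]; linarith
      have huv : u v = true := by rw [← periodic_congr hu hdvd]; exact hs
      have hvT : v ∈ (Finset.Icc (1 : ℤ) ((d + L : ℕ) : ℤ)).filter (fun r => u r = true) := by
        rw [Finset.mem_filter, Finset.mem_Icc]
        exact ⟨⟨by omega, by omega⟩, huv⟩
      obtain ⟨i, hi⟩ := q.surjective ⟨v, hvT⟩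
      refine ⟨i, ?_⟩
      have hQi : Q i = v := by
        show ((q i : ℤ)) = v
        rw [hi]
      rw [hQi]; exact hdvd
    · rintro ⟨i, hi⟩
      rw [periodic_congr hu hi]
      exact (hQprop i).2
  apply bool_eq_of_iff
  rw [word_iff, hchar (r + t)]
  constructor
  · rintro ⟨i, hi⟩
    rw [hposn i] at hi
    exact ⟨i, dvd_of_dvd_of_eq hi (by ring)⟩
  · rintro ⟨i, hi⟩
    refine ⟨i, ?_⟩
    rw [hposn i]
    exact dvd_of_dvd_of_eq hi (by ring)

end S12

/-- The map `g : x ↦ ⟨0^{x_1}1 … 0^{x_d}1⟩` is a surjection from `Δ_{d,L}` onto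
necklaces of length `d+L` with `d` ones, and it is a bidirectional covering map from
the simplex graph `D_{d,L}` to the necklace graph `N_{d,L}`: it restricts to
bijections between the out-neighbors (resp. in-neighbors) of `x` and of `g(x)`. -/
theorem stmt12 (d L : ℕ) [NeZero d] (hL : 1 ≤ L) :
    (∀ u : ℤ → Bool, IsPeriodicWord (d + L) u →
      ((Finset.Icc (1 : ℤ) ((d + L : ℕ) : ℤ)).filter (fun r => u r = true)).card = d →
      ∃ x : Fin d → ℤ, inSimplex d L x ∧ rotEquiv (wordOf d L x) u) ∧
    (∀ x : Fin d → ℤ, inSimplex d L x →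
      (∃ e : {i : Fin d // 0 < x i} ≃ {r : ℤ // r ∈ occ01 (d + L) (wordOf d L x)},
        ∀ i, rotEquiv (wordOf d L (x + step d i.1))
          (swap01 (d + L) (wordOf d L x) (e i).1)) ∧
      (∃ e : {i : Fin d // 0 < x (Fin.ofNat d (i.1 + 1))} ≃ {r : ℤ // r ∈ occ10 (d + L) (wordOf d L x)},
        ∀ i, rotEquiv (wordOf d L (x - step d i.1))
          (swap10 (d + L) (wordOf d L x) (e i).1))) := by
  constructor
  · intro u hu hcard
    exact S12.surj_part hL u hu hcard
  · intro x hx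
    constructor
    · refine ⟨Equiv.ofBijective
        (fun i => ⟨S12.posn x i.1, S12.mem_occ01 hx hL i.2⟩) ⟨?_, ?_⟩, ?_⟩
      · intro a b hab
        apply Subtype.ext
        exact S12.posn_injective hx (congrArg Subtype.val hab)
      · rintro ⟨r, hr⟩
        obtain ⟨i, hi, hpi⟩ := S12.occ01_exists hx hL hr
        exact ⟨⟨i, hi⟩, Subtype.ext hpi⟩
      · intro i
        exact S12.rot01 hx hL i.1
    · refine ⟨Equiv.ofBijective
        (fun i => ⟨if i.1 = S12.lastF d then 1 else S12.posn x i.1 + 1,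
          S12.mem_occ10 hx hL (by have h2 := i.2; rwa [show Fin.ofNat d (i.1.val + 1) = i.1 + 1 from Fin.ext (by simp [Fin.val_add])] at h2)⟩) ⟨?_, ?_⟩, ?_⟩
      · intro a b hab
        apply Subtype.ext
        have h := congrArg Subtype.val hab
        dsimp only at h
        by_cases ha : a.1 = S12.lastF d <;> by_cases hb : b.1 = S12.lastF d
        · rw [ha, hb]
        · rw [if_pos ha, if_neg hb] at h
          have := S12.posn_pos hx b.1; omega
        · rw [if_neg ha, if_pos hb] at h
          have := S12.posn_pos hx a.1; omega
        · rw [if_neg ha, if_neg hb] at h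
          exact S12.posn_injective hx (by omega)
      · rintro ⟨r, hr⟩
        obtain ⟨i, hi, hpi⟩ := S12.occ10_exists hx hL hr
        exact ⟨⟨i, by rwa [show Fin.ofNat d (i.val + 1) = i + 1 from Fin.ext (by simp [Fin.val_add])]⟩, Subtype.ext hpi⟩
      · intro i
        exact S12.rot10 hx hL i.1
end

section
/- For any α in CS_{d,L} and n ≥ 0, the number of standard cylindric tableaux of period (d,L) with n cells and inner shape α equals the number of n-step walks in the simplex graph D_{d,L} starting at the point x = (α_0-α_1, ..., α_{d-1}-α_d). -/
section Aux

variable (d : ℕ) [NeZero d]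

private def Fdiff (b : ℤ → ℤ) : Fin d → ℤ :=
  fun j => b (j.val : ℤ) - b ((j.val : ℤ) + 1)

private lemma hdpos : 0 < d := Nat.pos_of_ne_zero (NeZero.ne d)

private def res (i : ℤ) : Fin d :=
  ⟨(i % d).toNat, by
    have hd := hdpos d
    have h1 : 0 ≤ i % d := Int.emod_nonneg i (by exact_mod_cast hd.ne')
    have h2 : i % d < d := Int.emod_lt_of_pos i (by exact_mod_cast hd)
    omega⟩

private lemma res_val (i : ℤ) : (((res d i).val : ℤ)) = i % d := by
  have hd := hdpos d
  have h1 : 0 ≤ i % d := Int.emod_nonneg i (by exact_mod_cast hd.ne')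
  simp [res, Int.toNat_of_nonneg h1]

private lemma dvd_sub_iff (i j : ℤ) : (d : ℤ) ∣ (j - i) ↔ j % d = i % d := by
  rw [Int.dvd_iff_emod_eq_zero, Int.emod_eq_emod_iff_emod_sub_eq_zero]

private lemma dvd_iff_eq_res (i : ℤ) (j : Fin d) :
    ((d : ℤ) ∣ ((j.val : ℤ) - i)) ↔ j = res d i := by
  rw [dvd_sub_iff]
  have h1 : (j.val : ℤ) % d = (j.val : ℤ) :=
    Int.emod_eq_of_lt (by positivity) (by exact_mod_cast j.isLt)
  rw [h1, ← res_val d i]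
  constructor
  · intro h; exact Fin.ext (by exact_mod_cast h)
  · intro h; rw [h]

private lemma val_add_one (j : Fin d) : ((j + 1 : Fin d).val : ℤ) = ((j.val : ℤ) + 1) % d := by
  have h := Fin.val_add j 1
  rw [Fin.val_one' d] at h
  have h2 : (j.val + 1 % d) % d = (j.val + 1) % d := by
    rw [Nat.add_mod, Nat.mod_mod_of_dvd 1 dvd_rfl, ← Nat.add_mod]
  rw [h, h2]
  push_cast
  ring_nf

private lemma dvd_iff_eq_res' (i : ℤ) (j : Fin d) :
    ((d : ℤ) ∣ ((j.val : ℤ) + 1 - i)) ↔ j = res d i - 1 := by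
  rw [dvd_sub_iff, eq_sub_iff_add_eq]
  have h1 : ((j.val : ℤ) + 1) % d = ((j + 1 : Fin d).val : ℤ) % d := by
    rw [val_add_one, Int.emod_emod_of_dvd _ dvd_rfl]
  have h2 : ((j + 1 : Fin d).val : ℤ) % d = ((j + 1 : Fin d).val : ℤ) :=
    Int.emod_eq_of_lt (by positivity) (by exact_mod_cast (j + 1 : Fin d).isLt)
  rw [h1, h2, ← res_val d i]
  constructor
  · intro h; exact Fin.ext (by exact_mod_cast h)
  · intro h; rw [h]

private lemma res_fin (x : Fin d) : res d (x.val : ℤ) = x := by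
  apply Fin.ext
  have : (((res d ((x.val : ℤ))).val : ℤ)) = ((x.val : ℤ)) := by
    rw [res_val]
    exact Int.emod_eq_of_lt (by positivity) (by exact_mod_cast x.isLt)
  exact_mod_cast this

private lemma addCellAt_res (b : ℤ → ℤ) (i : ℤ) :
    addCellAt d i b = addCellAt d (((res d i).val : ℤ)) b := by
  funext j
  have : ((d : ℤ) ∣ (j - i)) ↔ ((d : ℤ) ∣ (j - ((res d i).val : ℤ))) := by
    rw [dvd_sub_iff, dvd_sub_iff, res_val, Int.emod_emod_of_dvd _ dvd_rfl]
  simp only [addCellAt, this]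

private lemma F_addCell (b : ℤ → ℤ) (i : ℤ) :
    Fdiff d (addCellAt d i b) = Fdiff d b + step d (res d i - 1) := by
  funext j
  have h1 := dvd_iff_eq_res d i j
  have h2 := dvd_iff_eq_res' d i j
  have h3 : res d i - 1 + 1 = res d i := sub_add_cancel _ _
  simp only [Fdiff, addCellAt, step, Pi.add_apply, h1, h2, h3]
  split_ifs <;> ring

private lemma shape_period {L : ℕ} {b : ℤ → ℤ} (hb : IsCylindricShape d L b) (j m : ℤ) :
    b (j + m * d) = b j - m * L := by
  induction m using Int.induction_on with
  | zero => simp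
  | succ k ih =>
    have h := hb.2 (j + k * d)
    have he : j + ((k : ℤ) + 1) * d = j + k * d + d := by ring
    rw [he]
    linarith [h]
  | pred k ih =>
    have h := hb.2 (j + (-(k : ℤ) - 1) * d)
    have he : j + (-(k : ℤ) - 1) * d + d = j + (-(k : ℤ)) * d := by ring
    rw [he] at h
    rw [h, ih]
    ring

private lemma F_mem_simplex {L : ℕ} {b : ℤ → ℤ} (hb : IsCylindricShape d L b) :
    inSimplex d L (Fdiff d b) := by
  constructor
  · intro j
    have := hb.1 (j.val : ℤ) ((j.val : ℤ) + 1) (by linarith)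
    simp only [Fdiff]; linarith
  · have step1 : ∑ j : Fin d, Fdiff d b j
        = ∑ k ∈ Finset.range d, ((fun m : ℕ => b (m : ℤ)) k - (fun m : ℕ => b (m : ℤ)) (k + 1)) := by
      rw [← Fin.sum_univ_eq_sum_range]
      refine Finset.sum_congr rfl fun j _ => ?_
      show Fdiff d b j = b ((j.val : ℕ) : ℤ) - b (((j.val + 1 : ℕ)) : ℤ)
      simp only [Fdiff]
      push_cast
      ring
    rw [step1, Finset.sum_range_sub' (fun m : ℕ => b (m : ℤ)) d]
    show b ((0 : ℕ) : ℤ) - b ((d : ℕ) : ℤ) = (L : ℤ)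
    have h0 := hb.2 0
    rw [zero_add] at h0
    push_cast
    linarith

private lemma addCell_shape {L : ℕ} {b : ℤ → ℤ} (hb : IsCylindricShape d L b) (i : ℤ)
    (hx : 1 ≤ Fdiff d b (res d i - 1)) : IsCylindricShape d L (addCellAt d i b) := by
  constructor
  · have key : ∀ j : ℤ, addCellAt d i b (j + 1) ≤ addCellAt d i b j := by
      intro j
      simp only [addCellAt]
      split_ifs with h1 h2 h2
      · linarith [hb.1 j (j + 1) (by linarith)]
      · -- hard case : j+1 ≡ i, j ≢ i
        set v : ℤ := (((res d i - 1 : Fin d)).val : ℤ) with hv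
        have hv1 : (d : ℤ) ∣ (v + 1 - i) := (dvd_iff_eq_res' d i (res d i - 1)).mpr rfl
        have hdvd : (d : ℤ) ∣ (j - v) := by
          have := dvd_sub h1 hv1
          have he : (j + 1 - i) - (v + 1 - i) = j - v := by ring
          rwa [he] at this
        obtain ⟨m, hm⟩ := hdvd
        have hj : j = v + m * d := by linarith [hm]
        have hj1 : j + 1 = (v + 1) + m * d := by linarith [hm]
        have e1 : b j = b v - m * L := by rw [hj]; exact shape_period d hb v m
        have e2 : b (j + 1) = b (v + 1) - m * L := by rw [hj1]; exact shape_period d hb (v + 1) m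
        have hx' : 1 ≤ b v - b (v + 1) := hx
        linarith
      · linarith [hb.1 j (j + 1) (by linarith)]
      · exact hb.1 j (j + 1) (by linarith)
    exact fun i' j' h => antitone_int_of_succ_le key h
  · intro j
    have hiff : ((d : ℤ) ∣ (j + d - i)) ↔ ((d : ℤ) ∣ (j - i)) := by
      have he : j + (d : ℤ) - i = (j - i) + d := by ring
      rw [he, dvd_add_self_right]
    have hp := hb.2 j
    simp only [addCellAt, hiff]
    split_ifs <;> linarith

private lemma step_eq_imp_addCell {b : ℤ → ℤ} {i i' : ℤ}
    (h : step d (res d i - 1) = step d (res d i' - 1)) :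
    addCellAt d i b = addCellAt d i' b := by
  by_cases hd1 : d = 1
  · subst hd1
    funext j
    simp only [addCellAt, Nat.cast_one, one_dvd, if_true]
  · have hd2 : 2 ≤ d := by have := hdpos d; omega
    have hres : res d i = res d i' := by
      set x := res d i - 1 with hxdef
      set y := res d i' - 1 with hydef
      have hx := congrFun h x
      simp only [step] at hx
      have hne : x ≠ x + 1 := by
        intro hxx
        have h01 : (0 : Fin d) = 1 := by
          have := add_left_cancel (a := x) (b := (0 : Fin d)) (c := 1)
            (by rw [add_zero]; exact hxx)
          exact this
        have hv := congrArg Fin.val h01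
        rw [Fin.val_one' d] at hv
        simp only [Fin.val_zero] at hv
        have : d ∣ 1 := Nat.dvd_iff_mod_eq_zero.mpr hv.symm
        exact hd1 (Nat.dvd_one.mp this)
      have hxy : x = y := by
        by_cases hxy2 : x = y
        · exact hxy2
        · exfalso
          by_cases hxy1 : x = y + 1 <;> simp [hne, hxy1, hxy2, hd1] at hx
      have : x + 1 = y + 1 := by rw [hxy]
      rwa [hxdef, hydef, sub_add_cancel, sub_add_cancel] at this
    rw [addCellAt_res d b i, addCellAt_res d b i', hres]

end Aux

/-- The number of standard cylindric tableaux of period `(d,L)` with `n` cells and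
inner shape `α` (in walk representation) equals the number of `n`-step walks in the
simplex graph `D_{d,L}` starting at `x = (α_0-α_1, …, α_{d-1}-α_d)`. -/
theorem stmt14 (d L : ℕ) [NeZero d] (hL : 1 ≤ L) (a : ℤ → ℤ)
    (ha : IsCylindricShape d L a) (n : ℕ) :
    Nat.card {p : Fin (n + 1) → ℤ → ℤ //
        p 0 = a ∧ (∀ k, IsCylindricShape d L (p k)) ∧
        ∀ k : Fin n, ∃ i : ℤ, p k.succ = addCellAt d i (p k.castSucc)} =
    Nat.card {q : Fin (n + 1) → Fin d → ℤ //
        q 0 = (fun k : Fin d => a (k.val : ℤ) - a ((k.val : ℤ) + 1)) ∧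
        (∀ k, inSimplex d L (q k)) ∧
        ∀ k : Fin n, ∃ i : Fin d, q k.succ = q k.castSucc + step d i} := by
  let f : {p : Fin (n + 1) → ℤ → ℤ //
        p 0 = a ∧ (∀ k, IsCylindricShape d L (p k)) ∧
        ∀ k : Fin n, ∃ i : ℤ, p k.succ = addCellAt d i (p k.castSucc)} →
      {q : Fin (n + 1) → Fin d → ℤ //
        q 0 = (fun k : Fin d => a (k.val : ℤ) - a ((k.val : ℤ) + 1)) ∧
        (∀ k, inSimplex d L (q k)) ∧
        ∀ k : Fin n, ∃ i : Fin d, q k.succ = q k.castSucc + step d i} :=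
    fun x => ⟨fun k => Fdiff d (x.1 k),
      by show Fdiff d (x.1 0) = _; rw [x.2.1]; rfl,
      fun k => F_mem_simplex d (x.2.2.1 k),
      fun k => by
        obtain ⟨i, hi⟩ := x.2.2.2 k
        exact ⟨res d i - 1, by show Fdiff d (x.1 k.succ) = _; rw [hi, F_addCell]⟩⟩
  refine Nat.card_eq_of_bijective f ⟨?_, ?_⟩
  · -- injectivity
    intro x y hxy
    have h : ∀ k, Fdiff d (x.1 k) = Fdiff d (y.1 k) :=
      fun k => congrFun (congrArg Subtype.val hxy) k
    have main : ∀ m : ℕ, ∀ hm : m < n + 1, x.1 ⟨m, hm⟩ = y.1 ⟨m, hm⟩ := by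
      intro m
      induction m with
      | zero =>
        intro hm
        have h0 : (⟨0, hm⟩ : Fin (n + 1)) = 0 := by ext; simp
        rw [h0, x.2.1, y.2.1]
      | succ m ih =>
        intro hm
        have hm' : m < n := by omega
        obtain ⟨i, hi⟩ := x.2.2.2 ⟨m, hm'⟩
        obtain ⟨i', hi'⟩ := y.2.2.2 ⟨m, hm'⟩
        have hb : x.1 (Fin.castSucc ⟨m, hm'⟩) = y.1 (Fin.castSucc ⟨m, hm'⟩) := by
          have hcs : (Fin.castSucc ⟨m, hm'⟩ : Fin (n + 1)) = ⟨m, by omega⟩ := rfl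
          rw [hcs]
          exact ih (by omega)
        have him := h (Fin.succ ⟨m, hm'⟩)
        rw [hi, hi', ← hb, F_addCell, F_addCell] at him
        have hstep : step d (res d i - 1) = step d (res d i' - 1) := add_left_cancel him
        have hsc : (Fin.succ ⟨m, hm'⟩ : Fin (n + 1)) = ⟨m + 1, hm⟩ := rfl
        rw [← hsc, hi, hi', ← hb, step_eq_imp_addCell d hstep]
    apply Subtype.ext
    funext k
    obtain ⟨kv, hk⟩ := k
    exact main kv hk
  · -- surjectivity
    rintro ⟨q, hq0, hqmem, hqstep⟩
    have hqstep2 := hqstep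
    choose st hst using hqstep2
    let P : ℕ → ℤ → ℤ := fun m =>
      Nat.rec a (fun m pm =>
        if h : m < n then addCellAt d (((st ⟨m, h⟩ + 1 : Fin d).val : ℤ)) pm else pm) m
    have hP0 : P 0 = a := rfl
    have hPsucc : ∀ m, P (m + 1) =
        if h : m < n then addCellAt d (((st ⟨m, h⟩ + 1 : Fin d).val : ℤ)) (P m) else P m :=
      fun m => rfl
    have inv : ∀ m, m ≤ n → IsCylindricShape d L (P m) ∧
        ∀ hm' : m < n + 1, Fdiff d (P m) = q ⟨m, hm'⟩ := by
      intro m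
      induction m with
      | zero =>
        intro _
        refine ⟨ha, fun hm' => ?_⟩
        have h0 : (⟨0, hm'⟩ : Fin (n + 1)) = 0 := by ext; simp
        rw [hP0, h0, hq0]
        rfl
      | succ m ih =>
        intro hm
        have hm' : m < n := by omega
        obtain ⟨hsh, hF⟩ := ih (by omega)
        have hFm := hF (by omega)
        have hqs := hst ⟨m, hm'⟩
        have hsc : (Fin.succ ⟨m, hm'⟩ : Fin (n + 1)) = ⟨m + 1, by omega⟩ := rfl
        have hcs : (Fin.castSucc ⟨m, hm'⟩ : Fin (n + 1)) = ⟨m, by omega⟩ := rfl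
        rw [hsc, hcs] at hqs
        set i := st ⟨m, hm'⟩ with hidef
        have hpos : 1 ≤ q ⟨m, by omega⟩ i := by
          have h0 := (hqmem ⟨m + 1, by omega⟩).1 i
          have he := congrFun hqs i
          simp only [Pi.add_apply] at he
          by_cases hii : i = i + 1
          · have h01 : (0 : Fin d) = 1 :=
              add_left_cancel (a := i) (by rw [add_zero]; exact hii)
            have hv := congrArg Fin.val h01
            rw [Fin.val_one' d] at hv
            simp only [Fin.val_zero] at hv
            have hd1 : d = 1 := Nat.dvd_one.mp (Nat.dvd_iff_mod_eq_zero.mpr hv.symm)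
            subst hd1
            have hsum := (hqmem ⟨m, by omega⟩).2
            rw [Fin.sum_univ_one] at hsum
            rw [Subsingleton.elim i 0, hsum]
            exact_mod_cast hL
          · have hsi : step d i i = -1 := by simp [step, hii]
            rw [hsi] at he
            have := (hqmem ⟨m, by omega⟩).1 i
            linarith
        have hres : res d (((i + 1 : Fin d).val : ℤ)) = i + 1 := res_fin d (i + 1)
        constructor
        · rw [hPsucc, dif_pos hm']
          apply addCell_shape d hsh
          rw [hres, add_sub_cancel_right, hFm]
          exact hpos
        · intro hm2
          rw [hPsucc, dif_pos hm', F_addCell, hres, add_sub_cancel_right, hFm]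
          exact hqs.symm
    refine ⟨⟨fun k => P k.val,
      by show P (0 : Fin (n + 1)).val = a; rw [Fin.val_zero]; exact hP0,
      fun k => (inv k.val (by omega)).1,
      ?_⟩, ?_⟩
    · rintro ⟨kv, hk⟩
      refine ⟨((st ⟨kv, hk⟩ + 1 : Fin d).val : ℤ), ?_⟩
      show P (kv + 1) = addCellAt d _ (P kv)
      rw [hPsucc, dif_pos hk]
    · apply Subtype.ext
      funext k
      show Fdiff d (P k.val) = q k
      obtain ⟨kv, hk⟩ := k
      exact (inv kv (by omega)).2 hk
end

section
/- For any point x ∈ Δ_{d,L} and any n ≥ 0, the number of n-step walks in D_{d,L} starting at x equals the number of n-step walks in D_{d,L} ending at x. -/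
instance (d L : ℕ) (x : Fin d → ℤ) : Decidable (inSimplex d L x) :=
  decidable_of_iff ((∀ j, 0 ≤ x j) ∧ ∑ j, x j = (L : ℤ)) Iff.rfl

section Aux

variable {d L : ℕ} [NeZero d]

lemma sum_step (i : Fin d) : ∑ k, step d i k = 0 := by
  simp [step, Finset.sum_sub_distrib, Finset.sum_ite_eq']

lemma step_eq_zero (h10 : (1 : Fin d) = 0) (i : Fin d) : step d i = 0 := by
  funext k
  have : i + 1 = i := by rw [h10, add_zero]
  simp [step, this]

lemma ne_add_one (h10 : (1 : Fin d) ≠ 0) (i : Fin d) : i ≠ i + 1 := fun h =>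
  h10 (left_eq_add.mp h)

lemma memS_add (hx : inSimplex d L x) (h10 : (1 : Fin d) ≠ 0) (i : Fin d) :
    inSimplex d L (x + step d i) ↔ 1 ≤ x i := by
  have hsum : ∑ k, (x + step d i) k = (L : ℤ) := by
    simp [Finset.sum_add_distrib, hx.2, sum_step]
  constructor
  · rintro ⟨hpos, -⟩
    have := hpos i
    simp only [Pi.add_apply, step, if_neg (ne_add_one h10 i), eq_self_iff_true, if_true] at this
    omega
  · intro h1
    refine ⟨fun k => ?_, hsum⟩
    rcases eq_or_ne k i with rfl | hk
    · simp only [Pi.add_apply, step, eq_self_iff_true, if_true]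
      split_ifs <;> omega
    · have := hx.1 k
      simp only [Pi.add_apply, step, if_neg hk]
      split_ifs <;> omega

lemma memS_sub (hx : inSimplex d L x) (h10 : (1 : Fin d) ≠ 0) (j : Fin d) :
    inSimplex d L (x - step d j) ↔ 1 ≤ x (j + 1) := by
  have hj1 : j + 1 ≠ j := fun h => h10 (add_eq_left.mp h)
  have hsum : ∑ k, (x - step d j) k = (L : ℤ) := by
    simp [Finset.sum_sub_distrib, hx.2, sum_step]
  constructor
  · rintro ⟨hpos, -⟩
    have := hpos (j + 1)
    simp only [Pi.sub_apply, step, eq_self_iff_true, if_true, if_neg hj1, if_true] at this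
    omega
  · intro h1
    refine ⟨fun k => ?_, hsum⟩
    rcases eq_or_ne k (j + 1) with rfl | hk
    · simp only [Pi.sub_apply, step, eq_self_iff_true, if_true, if_neg hj1]
      omega
    · have := hx.1 k
      simp only [Pi.sub_apply, step, if_neg hk]
      split_ifs <;> omega

/-- Key lemma: if `x` and `x + s_i - s_j` are in the simplex with `i ≠ j`, then both
intermediate points are too. -/
lemma keyA (hx : inSimplex d L x) {i j : Fin d} (hij : i ≠ j)
    (hz : inSimplex d L (x + step d i - step d j)) :
    inSimplex d L (x + step d i) ∧ inSimplex d L (x - step d j) := by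
  by_cases h10 : (1 : Fin d) = 0
  · exfalso
    have hd : d = 1 := by
      have := congrArg Fin.val h10
      rw [Fin.val_one', Fin.val_zero] at this
      by_contra hne
      have h2 : 2 ≤ d := by have := NeZero.pos d; omega
      rw [Nat.mod_eq_of_lt (by omega)] at this
      exact one_ne_zero this
    exact hij (by subst hd; exact Subsingleton.elim i j)
  · rw [memS_add hx h10, memS_sub hx h10]
    have hj1 : j + 1 ≠ j := fun h => h10 (add_eq_left.mp h)
    have hji : j + 1 ≠ i + 1 := fun h => hij (add_right_cancel h).symm
    constructor
    · have := hz.1 i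
      simp only [Pi.sub_apply, Pi.add_apply, step, if_neg (ne_add_one h10 i), eq_self_iff_true, if_true,
        if_neg hij] at this
      split_ifs at this <;> omega
    · have := hz.1 (j + 1)
      simp only [Pi.sub_apply, Pi.add_apply, step, eq_self_iff_true, if_true, if_neg hj1, if_neg hji] at this
      split_ifs at this <;> omega

lemma keyB (hx : inSimplex d L x) (i : Fin d) :
    inSimplex d L (x + step d i) ↔ inSimplex d L (x - step d (i - 1)) := by
  by_cases h10 : (1 : Fin d) = 0
  · rw [step_eq_zero h10, step_eq_zero h10, add_zero, sub_zero]
  · rw [memS_add hx h10 i, memS_sub hx h10 (i - 1), sub_add_cancel]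

end Aux
section Count

variable (d L : ℕ) [NeZero d]

/-- "Multiply by adjacency matrix": counts extensions forward. -/
noncomputable def AF (h : (Fin d → ℤ) → ℕ) : (Fin d → ℤ) → ℕ := fun x =>
  if inSimplex d L x then ∑ i, h (x + step d i) else 0

/-- "Multiply by transposed adjacency matrix". -/
noncomputable def AT (h : (Fin d → ℤ) → ℕ) : (Fin d → ℤ) → ℕ := fun x =>
  if inSimplex d L x then ∑ i, h (x - step d i) else 0

/-- Number of `n`-step walks starting at `x`. -/
noncomputable def cntF : ℕ → (Fin d → ℤ) → ℕ
  | 0 => fun x => if inSimplex d L x then 1 else 0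
  | n + 1 => AF d L (cntF n)

/-- Number of `n`-step walks ending at `x`. -/
noncomputable def cntG : ℕ → (Fin d → ℤ) → ℕ
  | 0 => fun x => if inSimplex d L x then 1 else 0
  | n + 1 => AT d L (cntG n)

variable {d L}

lemma cntF_vanish (n : ℕ) {x : Fin d → ℤ} (hx : ¬ inSimplex d L x) : cntF d L n x = 0 := by
  cases n <;> simp [cntF, AF, hx]

/-- Normality: `A Aᵀ = Aᵀ A` on functions vanishing outside the simplex. -/
lemma normality (h : (Fin d → ℤ) → ℕ) (hvan : ∀ y, ¬ inSimplex d L y → h y = 0) :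
    AF d L (AT d L h) = AT d L (AF d L h) := by
  funext x
  by_cases hx : inSimplex d L x
  · simp only [AF, AT, if_pos hx]
    have lhs_eq : ∀ i : Fin d,
        (if inSimplex d L (x + step d i) then ∑ j, h (x + step d i - step d j) else 0) =
        ∑ j, if inSimplex d L (x + step d i) ∧ inSimplex d L (x + step d i - step d j) then
          h (x + step d i - step d j) else 0 := by
      intro i
      split_ifs with hi
      · refine Finset.sum_congr rfl fun j _ => ?_
        by_cases hz : inSimplex d L (x + step d i - step d j)
        · rw [if_pos ⟨hi, hz⟩]
        · rw [if_neg (fun c => hz c.2), hvan _ hz]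
      · rw [Finset.sum_eq_zero fun j _ => if_neg (fun c => hi c.1)]
    have rhs_eq : ∀ i : Fin d,
        (if inSimplex d L (x - step d i) then ∑ j, h (x - step d i + step d j) else 0) =
        ∑ j, if inSimplex d L (x - step d i) ∧ inSimplex d L (x - step d i + step d j) then
          h (x - step d i + step d j) else 0 := by
      intro i
      split_ifs with hi
      · refine Finset.sum_congr rfl fun j _ => ?_
        by_cases hz : inSimplex d L (x - step d i + step d j)
        · rw [if_pos ⟨hi, hz⟩]
        · rw [if_neg (fun c => hz c.2), hvan _ hz]
      · rw [Finset.sum_eq_zero fun j _ => if_neg (fun c => hi c.1)]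
    simp only [lhs_eq, rhs_eq]
    rw [← Fintype.sum_prod_type', ← Fintype.sum_prod_type']
    -- bijection (i,j) ↦ if i = j then (i-1, i-1) else (j, i)
    refine Fintype.sum_equiv
      ⟨fun p => if p.1 = p.2 then (p.1 - 1, p.1 - 1) else (p.2, p.1),
       fun p => if p.1 = p.2 then (p.1 + 1, p.1 + 1) else (p.2, p.1), ?_, ?_⟩ _ _ ?_
    · rintro ⟨i, j⟩
      by_cases hij : i = j
      · subst hij; simp [sub_add_cancel]
      · simp [hij, Ne.symm hij]
    · rintro ⟨i, j⟩
      by_cases hij : i = j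
      · subst hij; simp [add_sub_cancel_right]
      · simp [hij, Ne.symm hij]
    · rintro ⟨i, j⟩
      by_cases hij : i = j
      · subst hij
        simp only [Equiv.coe_fn_mk, eq_self_iff_true, if_true]
        rw [add_sub_cancel_right, sub_add_cancel]
        exact if_congr (and_congr (keyB hx i) Iff.rfl) rfl rfl
      · simp only [Equiv.coe_fn_mk, if_neg hij]
        have hpt : x + step d i - step d j = x - step d j + step d i := by
          rw [add_sub_right_comm]
        rw [hpt]
        refine if_congr ?_ rfl rfl
        constructor
        · rintro ⟨-, hz⟩
          rw [← hpt] at hz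
          exact ⟨(keyA hx hij hz).2, hpt ▸ hz⟩
        · rintro ⟨-, hz⟩
          rw [← hpt] at hz
          exact ⟨(keyA hx hij hz).1, hpt ▸ hz⟩
  · simp [AF, AT, if_neg hx]

lemma balance : AF d L (cntF d L 0) = AT d L (cntF d L 0) := by
  funext x
  by_cases hx : inSimplex d L x
  · simp only [AF, AT, if_pos hx, cntF]
    exact Fintype.sum_equiv (Equiv.subRight (1 : Fin d)) _ _
      fun i => if_congr (keyB hx i) rfl rfl
  · simp [AF, AT, if_neg hx]

lemma AFeqAT (n : ℕ) : AF d L (cntF d L n) = AT d L (cntF d L n) := by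
  induction n with
  | zero => exact balance
  | succ n ih =>
    show AF d L (AF d L (cntF d L n)) = AT d L (AF d L (cntF d L n))
    rw [← normality (cntF d L n) (fun y hy => cntF_vanish n hy), ← ih]

lemma cntF_eq_cntG (n : ℕ) : cntF d L n = cntG d L n := by
  induction n with
  | zero => rfl
  | succ n ih =>
    show AF d L (cntF d L n) = AT d L (cntG d L n)
    rw [AFeqAT n, ih]

end Count
section Walks

variable {d L : ℕ} [NeZero d]

lemma step_inj : Function.Injective (step d) := by
  intro a b h
  by_cases h10 : (1 : Fin d) = 0
  · have hd : d = 1 := by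
      have := congrArg Fin.val h10
      rw [Fin.val_one', Fin.val_zero] at this
      by_contra hne
      have h2 : 2 ≤ d := by have := NeZero.pos d; omega
      rw [Nat.mod_eq_of_lt (by omega)] at this
      exact one_ne_zero this
    have ha := a.isLt
    have hb := b.isLt
    exact Fin.ext (by omega)
  · by_contra hab
    have := congrFun h a
    simp only [step, if_neg (ne_add_one h10 a), eq_self_iff_true, if_true,
      if_neg hab] at this
    split_ifs at this <;> omega

lemma finite_walkFrom (n : ℕ) (x : Fin d → ℤ) :
    Finite {q : Fin (n + 1) → Fin d → ℤ //
      q 0 = x ∧ (∀ k, inSimplex d L (q k)) ∧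
      ∀ k : Fin n, ∃ i : Fin d, q k.succ = q k.castSucc + step d i} := by
  apply Finite.of_injective (fun q => fun k : Fin n => Classical.choose (q.2.2.2 k))
  intro q q' hqq
  apply Subtype.ext
  funext k
  induction k using Fin.induction with
  | zero => exact q.2.1.trans q'.2.1.symm
  | succ m ih =>
    have h1 := Classical.choose_spec (q.2.2.2 m)
    have h2 := Classical.choose_spec (q'.2.2.2 m)
    have h3 : step d (Classical.choose (q.2.2.2 m)) = step d (Classical.choose (q'.2.2.2 m)) :=
      congrArg (step d) (congrFun hqq m)
    exact h1.trans ((congrArg₂ (· + ·) ih h3).trans h2.symm)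

lemma finite_walkTo (n : ℕ) (x : Fin d → ℤ) :
    Finite {q : Fin (n + 1) → Fin d → ℤ //
      q (Fin.last n) = x ∧ (∀ k, inSimplex d L (q k)) ∧
      ∀ k : Fin n, ∃ i : Fin d, q k.succ = q k.castSucc + step d i} := by
  apply Finite.of_injective (fun q => fun k : Fin n => Classical.choose (q.2.2.2 k))
  intro q q' hqq
  apply Subtype.ext
  funext k
  induction k using Fin.reverseInduction with
  | last => exact q.2.1.trans q'.2.1.symm
  | cast m ih =>
    have h1 := Classical.choose_spec (q.2.2.2 m)
    have h2 := Classical.choose_spec (q'.2.2.2 m)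
    have h3 : step d (Classical.choose (q.2.2.2 m)) = step d (Classical.choose (q'.2.2.2 m)) :=
      congrArg (step d) (congrFun hqq m)
    have h4 : q.val m.castSucc + step d (Classical.choose (q.2.2.2 m)) =
        q'.val m.castSucc + step d (Classical.choose (q.2.2.2 m)) :=
      h1.symm.trans (ih.trans (h2.trans (congrArg₂ (· + ·) rfl h3.symm)))
    exact add_right_cancel h4

end Walks
section Cards

variable {d L : ℕ} [NeZero d]

lemma card_from : ∀ (n : ℕ) (x : Fin d → ℤ),
    Nat.card {q : Fin (n + 1) → Fin d → ℤ //
      q 0 = x ∧ (∀ k, inSimplex d L (q k)) ∧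
      ∀ k : Fin n, ∃ i : Fin d, q k.succ = q k.castSucc + step d i} = cntF d L n x := by
  intro n
  induction n with
  | zero =>
    intro x
    by_cases hx : inSimplex d L x
    · rw [show cntF d L 0 x = 1 from if_pos hx]
      rw [Nat.card_eq_one_iff_unique]
      constructor
      · constructor
        intro a b
        apply Subtype.ext
        funext k
        rw [Fin.eq_zero k]
        exact a.2.1.trans b.2.1.symm
      · exact ⟨⟨fun _ => x, rfl, fun _ => hx, fun k => k.elim0⟩⟩
    · rw [show cntF d L 0 x = 0 from if_neg hx]
      have : IsEmpty {q : Fin 1 → Fin d → ℤ //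
          q 0 = x ∧ (∀ k, inSimplex d L (q k)) ∧
          ∀ k : Fin 0, ∃ i : Fin d, q k.succ = q k.castSucc + step d i} :=
        ⟨fun q => hx (q.2.1 ▸ q.2.2.1 0)⟩
      exact Nat.card_of_isEmpty
  | succ n ih =>
    intro x
    by_cases hx : inSimplex d L x
    · have e : (Σ i : Fin d, {q : Fin (n + 1) → Fin d → ℤ //
          q 0 = x + step d i ∧ (∀ k, inSimplex d L (q k)) ∧
          ∀ k : Fin n, ∃ i' : Fin d, q k.succ = q k.castSucc + step d i'}) ≃
          {q : Fin (n + 2) → Fin d → ℤ //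
          q 0 = x ∧ (∀ k, inSimplex d L (q k)) ∧
          ∀ k : Fin (n + 1), ∃ i' : Fin d, q k.succ = q k.castSucc + step d i'} := by
        refine Equiv.ofBijective (fun p => ⟨Fin.cons x p.2.1, Fin.cons_zero _ _, ?_, ?_⟩) ⟨?_, ?_⟩
        · intro k
          induction k using Fin.cases with
          | zero => rw [Fin.cons_zero]; exact hx
          | succ m => rw [Fin.cons_succ]; exact p.2.2.2.1 m
        · intro k
          induction k using Fin.cases with
          | zero =>
            refine ⟨p.1, ?_⟩
            rw [Fin.cons_succ, Fin.castSucc_zero, Fin.cons_zero]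
            exact p.2.2.1
          | succ m =>
            refine (p.2.2.2.2 m).imp fun i' hi' => ?_
            rw [Fin.cons_succ, ← Fin.succ_castSucc, Fin.cons_succ]
            exact hi'
        · rintro ⟨i, w, hw0, hwS, hwst⟩ ⟨i', w', hw0', hwS', hwst'⟩ h
          rw [Subtype.mk.injEq] at h
          have hww : w = w' := by
            funext j
            have := congrFun h (Fin.succ j)
            rwa [Fin.cons_succ, Fin.cons_succ] at this
          subst hww
          have : i = i' := step_inj (add_left_cancel (hw0.symm.trans hw0'))
          subst this
          rfl
        · rintro ⟨q, hq0, hqS, hqst⟩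
          obtain ⟨i, hi⟩ := hqst 0
          rw [Fin.castSucc_zero, hq0] at hi
          refine ⟨⟨i, Fin.tail q, ?_, fun k => hqS k.succ, fun k => ?_⟩, ?_⟩
          · exact hi
          · refine (hqst k.succ).imp fun i' hi' => ?_
            show q (Fin.succ k.succ) = q (Fin.succ k.castSucc) + step d i'
            rw [Fin.succ_castSucc]
            exact hi'
          · apply Subtype.ext
            show Fin.cons x (Fin.tail q) = q
            rw [← hq0]
            exact Fin.cons_self_tail q
      rw [← Nat.card_congr e]
      haveI : ∀ i : Fin d, Fintype {q : Fin (n + 1) → Fin d → ℤ //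
          q 0 = x + step d i ∧ (∀ k, inSimplex d L (q k)) ∧
          ∀ k : Fin n, ∃ i' : Fin d, q k.succ = q k.castSucc + step d i'} :=
        fun i => @Fintype.ofFinite _ (finite_walkFrom n (x + step d i))
      rw [Nat.card_eq_fintype_card, Fintype.card_sigma]
      rw [show cntF d L (n + 1) x = ∑ i, cntF d L n (x + step d i) from if_pos hx]
      exact Finset.sum_congr rfl fun i _ => by
        rw [← Nat.card_eq_fintype_card]
        exact ih (x + step d i)
    · rw [show cntF d L (n + 1) x = 0 from if_neg hx]
      have : IsEmpty {q : Fin (n + 2) → Fin d → ℤ //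
          q 0 = x ∧ (∀ k, inSimplex d L (q k)) ∧
          ∀ k : Fin (n + 1), ∃ i : Fin d, q k.succ = q k.castSucc + step d i} :=
        ⟨fun q => hx (q.2.1 ▸ q.2.2.1 0)⟩
      exact Nat.card_of_isEmpty

end Cards
section CardsTo

variable {d L : ℕ} [NeZero d]

lemma card_to : ∀ (n : ℕ) (x : Fin d → ℤ),
    Nat.card {q : Fin (n + 1) → Fin d → ℤ //
      q (Fin.last n) = x ∧ (∀ k, inSimplex d L (q k)) ∧
      ∀ k : Fin n, ∃ i : Fin d, q k.succ = q k.castSucc + step d i} = cntG d L n x := by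
  intro n
  induction n with
  | zero =>
    intro x
    by_cases hx : inSimplex d L x
    · rw [show cntG d L 0 x = 1 from if_pos hx]
      rw [Nat.card_eq_one_iff_unique]
      constructor
      · constructor
        intro a b
        apply Subtype.ext
        funext k
        rw [Fin.eq_zero k, show (0 : Fin 1) = Fin.last 0 from rfl]
        exact a.2.1.trans b.2.1.symm
      · exact ⟨⟨fun _ => x, rfl, fun _ => hx, fun k => k.elim0⟩⟩
    · rw [show cntG d L 0 x = 0 from if_neg hx]
      have : IsEmpty {q : Fin 1 → Fin d → ℤ //
          q (Fin.last 0) = x ∧ (∀ k, inSimplex d L (q k)) ∧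
          ∀ k : Fin 0, ∃ i : Fin d, q k.succ = q k.castSucc + step d i} :=
        ⟨fun q => hx (q.2.1 ▸ q.2.2.1 (Fin.last 0))⟩
      exact Nat.card_of_isEmpty
  | succ n ih =>
    intro x
    by_cases hx : inSimplex d L x
    · have e : (Σ i : Fin d, {q : Fin (n + 1) → Fin d → ℤ //
          q (Fin.last n) = x - step d i ∧ (∀ k, inSimplex d L (q k)) ∧
          ∀ k : Fin n, ∃ i' : Fin d, q k.succ = q k.castSucc + step d i'}) ≃
          {q : Fin (n + 2) → Fin d → ℤ //
          q (Fin.last (n + 1)) = x ∧ (∀ k, inSimplex d L (q k)) ∧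
          ∀ k : Fin (n + 1), ∃ i' : Fin d, q k.succ = q k.castSucc + step d i'} := by
        refine Equiv.ofBijective (fun p => ⟨Fin.snoc p.2.1 x, Fin.snoc_last _ _, ?_, ?_⟩) ⟨?_, ?_⟩
        · intro k
          induction k using Fin.lastCases with
          | last => rw [Fin.snoc_last]; exact hx
          | cast m => rw [Fin.snoc_castSucc]; exact p.2.2.2.1 m
        · intro k
          induction k using Fin.lastCases with
          | last =>
            refine ⟨p.1, ?_⟩
            rw [Fin.succ_last, Fin.snoc_last, Fin.snoc_castSucc, p.2.2.1, sub_add_cancel]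
          | cast m =>
            refine (p.2.2.2.2 m).imp fun i' hi' => ?_
            rw [Fin.succ_castSucc, Fin.snoc_castSucc, Fin.snoc_castSucc]
            exact hi'
        · rintro ⟨i, w, hw0, hwS, hwst⟩ ⟨i', w', hw0', hwS', hwst'⟩ h
          rw [Subtype.mk.injEq] at h
          have hww : w = w' := by
            funext j
            have := congrFun h (Fin.castSucc j)
            rwa [Fin.snoc_castSucc, Fin.snoc_castSucc] at this
          subst hww
          have : i = i' := step_inj (sub_right_inj.mp (hw0.symm.trans hw0'))
          subst this
          rfl
        · rintro ⟨q, hqL, hqS, hqst⟩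
          obtain ⟨i, hi⟩ := hqst (Fin.last n)
          rw [Fin.succ_last, hqL] at hi
          refine ⟨⟨i, Fin.init q, ?_, fun k => hqS k.castSucc, fun k => ?_⟩, ?_⟩
          · show q (Fin.castSucc (Fin.last n)) = x - step d i
            exact eq_sub_of_add_eq hi.symm
          · refine (hqst k.castSucc).imp fun i' hi' => ?_
            show q (Fin.castSucc k.succ) = q (Fin.castSucc k.castSucc) + step d i'
            rw [← Fin.succ_castSucc]
            exact hi'
          · apply Subtype.ext
            show Fin.snoc (Fin.init q) x = q
            rw [← hqL]
            exact Fin.snoc_init_self q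
      rw [← Nat.card_congr e]
      haveI : ∀ i : Fin d, Fintype {q : Fin (n + 1) → Fin d → ℤ //
          q (Fin.last n) = x - step d i ∧ (∀ k, inSimplex d L (q k)) ∧
          ∀ k : Fin n, ∃ i' : Fin d, q k.succ = q k.castSucc + step d i'} :=
        fun i => @Fintype.ofFinite _ (finite_walkTo n (x - step d i))
      rw [Nat.card_eq_fintype_card, Fintype.card_sigma]
      rw [show cntG d L (n + 1) x = ∑ i, cntG d L n (x - step d i) from if_pos hx]
      exact Finset.sum_congr rfl fun i _ => by
        rw [← Nat.card_eq_fintype_card]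
        exact ih (x - step d i)
    · rw [show cntG d L (n + 1) x = 0 from if_neg hx]
      have : IsEmpty {q : Fin (n + 2) → Fin d → ℤ //
          q (Fin.last (n + 1)) = x ∧ (∀ k, inSimplex d L (q k)) ∧
          ∀ k : Fin (n + 1), ∃ i : Fin d, q k.succ = q k.castSucc + step d i} :=
        ⟨fun q => hx (q.2.1 ▸ q.2.2.1 (Fin.last (n + 1)))⟩
      exact Nat.card_of_isEmpty

end CardsTo

/-- For any `x ∈ Δ_{d,L}` and `n ≥ 0`, the number of `n`-step walks in `D_{d,L}`
starting at `x` equals the number of `n`-step walks in `D_{d,L}` ending at `x`. -/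
theorem stmt15 (d L : ℕ) [NeZero d] (hL : 1 ≤ L) (x : Fin d → ℤ)
    (hx : inSimplex d L x) (n : ℕ) :
    Nat.card {q : Fin (n + 1) → Fin d → ℤ //
        q 0 = x ∧ (∀ k, inSimplex d L (q k)) ∧
        ∀ k : Fin n, ∃ i : Fin d, q k.succ = q k.castSucc + step d i} =
    Nat.card {q : Fin (n + 1) → Fin d → ℤ //
        q (Fin.last n) = x ∧ (∀ k, inSimplex d L (q k)) ∧
        ∀ k : Fin n, ∃ i : Fin d, q k.succ = q k.castSucc + step d i} := by
  rw [card_from n x, card_to n x, cntF_eq_cntG]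
end

section
/- Fix α ∈ CS_{d,L} and n ≥ 0. For any two words w, w' ∈ {+,-}^n, the number of oscillating cylindric tableaux of period (d,L), length n, type w, starting at α equals the number of those of type w' starting at α. In particular, this common number equals the number of standard cylindric tableaux with n cells and inner shape α. -/
/-- Oscillating cylindric tableaux of period `(d,L)`, length `n`, type `w`
(`true` = add a cell, `false` = remove a cell), starting at `a`. -/
def OctSet (d L : ℕ) (a : ℤ → ℤ) (n : ℕ) (w : Fin n → Bool) :=
  {p : Fin (n + 1) → ℤ → ℤ //
    p 0 = a ∧ (∀ k, IsCylindricShape d L (p k)) ∧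
    ∀ k : Fin n, ∃ i : ℤ,
      if w k then p k.succ = addCellAt d i (p k.castSucc)
      else p k.castSucc = addCellAt d i (p k.succ)}

namespace Oct16


/-- removing a cell in row `i`. -/
def rmCellAt (d : ℕ) (i : ℤ) (a : ℤ → ℤ) : ℤ → ℤ :=
  fun j => if (d : ℤ) ∣ (j - i) then a j - 1 else a j

lemma addCellAt_apply (d : ℕ) (i : ℤ) (a : ℤ → ℤ) (j : ℤ) :
    addCellAt d i a j = a j + (if (d : ℤ) ∣ (j - i) then 1 else 0) := by
  unfold addCellAt; split <;> simp

lemma rmCellAt_apply (d : ℕ) (i : ℤ) (a : ℤ → ℤ) (j : ℤ) :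
    rmCellAt d i a j = a j - (if (d : ℤ) ∣ (j - i) then 1 else 0) := by
  unfold rmCellAt; split <;> simp

lemma add_rm_cancel (d : ℕ) (i : ℤ) (a : ℤ → ℤ) :
    addCellAt d i (rmCellAt d i a) = a := by
  funext j; unfold addCellAt rmCellAt; split <;> simp

lemma rm_add_cancel (d : ℕ) (i : ℤ) (a : ℤ → ℤ) :
    rmCellAt d i (addCellAt d i a) = a := by
  funext j; unfold addCellAt rmCellAt
  by_cases h : (d : ℤ) ∣ (j - i) <;> simp [h]

lemma addCellAt_congr {d : ℕ} {i i' : ℤ} (h : (d : ℤ) ∣ (i - i')) (a : ℤ → ℤ) :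
    addCellAt d i a = addCellAt d i' a := by
  funext j
  have : (d : ℤ) ∣ (j - i) ↔ (d : ℤ) ∣ (j - i') := by
    constructor
    · intro h1; have := dvd_add h1 h; simpa [sub_add_sub_cancel] using this
    · intro h1; have := dvd_sub h1 h; simpa [sub_sub_sub_cancel_right] using this
  unfold addCellAt; rw [if_congr this rfl rfl]

lemma anti_of_step {a : ℤ → ℤ} (h : ∀ j : ℤ, a j ≤ a (j - 1)) :
    ∀ i j : ℤ, i ≤ j → a j ≤ a i := by
  intro i j hij
  refine Int.le_induction (motive := fun j _ => a j ≤ a i) (le_refl _) (fun m _ ih => ?_) j hij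
  have hm := h (m + 1)
  rw [show m + 1 - 1 = m by ring] at hm
  exact le_trans hm ih

lemma shape_of {d L : ℕ} {a : ℤ → ℤ} (hper : ∀ i : ℤ, a i = a (i + d) + L)
    (hstep : ∀ j : ℤ, a j ≤ a (j - 1)) : IsCylindricShape d L a :=
  ⟨anti_of_step hstep, hper⟩

lemma shape_anti {d L : ℕ} {a : ℤ → ℤ} (ha : IsCylindricShape d L a) {i j : ℤ}
    (h : i ≤ j) : a j ≤ a i := ha.1 i j h

lemma period_mul {d L : ℕ} {a : ℤ → ℤ} (ha : IsCylindricShape d L a) (i : ℤ) :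
    ∀ t : ℤ, a (i + d * t) = a i - L * t := by
  intro t
  induction t using Int.induction_on with
  | zero => simp
  | succ t ih =>
    have := ha.2 (i + d * t)
    have e : i + d * (t + 1) = (i + d * t) + d := by ring
    rw [e]; push_cast; push_cast at ih; linarith
  | pred t ih =>
    have := ha.2 (i + d * (-t - 1))
    have e : i + (d : ℤ) * (-t - 1) + d = i + d * (-t) := by ring
    rw [e] at this; push_cast; push_cast at ih; linarith

lemma eq_one_of_cast_dvd_one {d : ℕ} (h : (d : ℤ) ∣ (1 : ℤ)) : d = 1 := by
  have : d ∣ 1 := by exact_mod_cast h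
  exact Nat.dvd_one.mp this

lemma shape_add_iff {d L : ℕ} (hL : 1 ≤ L) {a : ℤ → ℤ}
    (ha : IsCylindricShape d L a) (i : ℤ) :
    IsCylindricShape d L (addCellAt d i a) ↔ a i < a (i - 1) := by
  constructor
  · intro hs
    by_cases hdvd : (d : ℤ) ∣ (i - 1 - i)
    · -- then d = 1
      have hd1 : d = 1 := by
        have h2 := hdvd
        rw [show i - 1 - i = (-1 : ℤ) by ring] at h2
        exact eq_one_of_cast_dvd_one (dvd_neg.mp h2)
      have := ha.2 (i - 1)
      rw [hd1] at this
      push_cast at this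
      have : a (i - 1) = a i + L := by rw [this]; ring_nf
      have hL' : (1 : ℤ) ≤ L := by exact_mod_cast hL
      linarith
    · have hmono := hs.1 (i - 1) i (by linarith)
      unfold addCellAt at hmono
      rw [if_pos (by simp), if_neg hdvd] at hmono
      linarith
  · intro h
    apply shape_of
    · intro j
      have hiff : (d : ℤ) ∣ (j - i) ↔ (d : ℤ) ∣ (j + d - i) := by
        constructor
        · intro h1; have := dvd_add h1 (dvd_refl (d : ℤ)); convert this using 1; rfl; ring
        · intro h1; have := dvd_sub h1 (dvd_refl (d : ℤ)); convert this using 1; rfl; ring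
      have hper := ha.2 j
      unfold addCellAt
      by_cases h1 : (d : ℤ) ∣ (j - i)
      · rw [if_pos h1, if_pos (hiff.mp h1)]; linarith
      · rw [if_neg h1, if_neg (fun hc => h1 (hiff.mpr hc))]; exact hper
    · intro j
      rw [addCellAt_apply, addCellAt_apply]
      by_cases h1 : (d : ℤ) ∣ (j - i)
      · by_cases h2 : (d : ℤ) ∣ (j - 1 - i)
        · rw [if_pos h1, if_pos h2]
          have := shape_anti ha (show j - 1 ≤ j by linarith); linarith
        · rw [if_pos h1, if_neg h2]
          obtain ⟨t, ht⟩ := h1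
          have hj : j = i + d * t := by linarith
          have e1 : a j = a i - L * t := by rw [hj]; exact period_mul ha i t
          have e2 : a (j - 1) = a (i - 1) - L * t := by
            have : j - 1 = (i - 1) + d * t := by rw [hj]; ring
            rw [this]; exact period_mul ha (i - 1) t
          rw [e1, e2]; linarith
      · by_cases h2 : (d : ℤ) ∣ (j - 1 - i)
        · rw [if_neg h1, if_pos h2]
          have := shape_anti ha (show j - 1 ≤ j by linarith); linarith
        · rw [if_neg h1, if_neg h2]
          have := shape_anti ha (show j - 1 ≤ j by linarith); linarith

lemma shape_rm_iff {d L : ℕ} (hL : 1 ≤ L) {a : ℤ → ℤ}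
    (ha : IsCylindricShape d L a) (i : ℤ) :
    IsCylindricShape d L (rmCellAt d i a) ↔ a (i + 1) < a i := by
  constructor
  · intro hs
    by_cases hdvd : (d : ℤ) ∣ (i - (i + 1))
    · have hd1 : d = 1 := by
        have h2 := hdvd
        rw [show i - (i + 1) = (-1 : ℤ) by ring] at h2
        exact eq_one_of_cast_dvd_one (dvd_neg.mp h2)
      have := ha.2 i
      rw [hd1] at this
      push_cast at this
      have hL' : (1 : ℤ) ≤ L := by exact_mod_cast hL
      have : a (i + 1) ≤ a i - 1 := by linarith
      linarith
    · have hmono := hs.1 i (i + 1) (by linarith)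
      unfold rmCellAt at hmono
      have h1' : ¬ (d : ℤ) ∣ (i + 1 - i) := by
        intro hc
        apply hdvd
        rw [show i + 1 - i = (1 : ℤ) by ring] at hc
        rw [show i - (i + 1) = (-1 : ℤ) by ring]
        exact dvd_neg.mpr hc
      rw [if_neg h1', if_pos (by simp)] at hmono
      linarith
  · intro h
    apply shape_of
    · intro j
      have hiff : (d : ℤ) ∣ (j - i) ↔ (d : ℤ) ∣ (j + d - i) := by
        constructor
        · intro h1; have := dvd_add h1 (dvd_refl (d : ℤ)); convert this using 1; rfl; ring
        · intro h1; have := dvd_sub h1 (dvd_refl (d : ℤ)); convert this using 1; rfl; ring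
      have hper := ha.2 j
      unfold rmCellAt
      by_cases h1 : (d : ℤ) ∣ (j - i)
      · rw [if_pos h1, if_pos (hiff.mp h1)]; linarith
      · rw [if_neg h1, if_neg (fun hc => h1 (hiff.mpr hc))]; exact hper
    · intro j
      rw [rmCellAt_apply, rmCellAt_apply]
      by_cases h1 : (d : ℤ) ∣ (j - i)
      · by_cases h2 : (d : ℤ) ∣ (j - 1 - i)
        · rw [if_pos h1, if_pos h2]
          have := shape_anti ha (show j - 1 ≤ j by linarith); linarith
        · rw [if_pos h1, if_neg h2]
          have := shape_anti ha (show j - 1 ≤ j by linarith); linarith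
      · by_cases h2 : (d : ℤ) ∣ (j - 1 - i)
        · rw [if_neg h1, if_pos h2]
          obtain ⟨t, ht⟩ := h2
          have hj : j = (i + 1) + d * t := by linarith
          have e1 : a j = a (i + 1) - L * t := by rw [hj]; exact period_mul ha (i + 1) t
          have e2 : a (j - 1) = a i - L * t := by
            have : j - 1 = i + d * t := by rw [hj]; ring
            rw [this]; exact period_mul ha i t
          rw [e1, e2]; linarith
        · rw [if_neg h1, if_neg h2]
          have := shape_anti ha (show j - 1 ≤ j by linarith); linarith

/-- `b = a + box`. -/
def StepUp (d : ℕ) (a b : ℤ → ℤ) : Prop := ∃ i : ℤ, b = addCellAt d i a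
/-- `b = a - box` (i.e. `a = b + box`). -/
def StepDn (d : ℕ) (a b : ℤ → ℤ) : Prop := ∃ i : ℤ, a = addCellAt d i b

/-- if `b = a - box_{i-1}`, this is `a + box_i`. -/
def upOf (a b : ℤ → ℤ) : ℤ → ℤ := fun j => a j + (a (j - 1) - b (j - 1))
/-- if `c = a + box_i`, this is `a - box_{i-1}`. -/
def dnOf (a c : ℤ → ℤ) : ℤ → ℤ := fun j => a j - (c (j + 1) - a (j + 1))

lemma upOf_rm (d : ℕ) (i : ℤ) (a : ℤ → ℤ) :
    upOf a (rmCellAt d i a) = addCellAt d (i + 1) a := by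
  funext j
  rw [show upOf a (rmCellAt d i a) j = a j + (a (j-1) - rmCellAt d i a (j-1)) from rfl,
    rmCellAt_apply, addCellAt_apply]
  have hiff : ((d : ℤ) ∣ (j - 1 - i)) ↔ ((d : ℤ) ∣ (j - (i + 1))) := by
    constructor <;> intro h <;> · convert h using 1; ring
  by_cases h : (d : ℤ) ∣ (j - 1 - i)
  · rw [if_pos h, if_pos (hiff.mp h)]; ring
  · rw [if_neg h, if_neg (fun hc => h (hiff.mpr hc))]; ring

lemma dnOf_add (d : ℕ) (i : ℤ) (a : ℤ → ℤ) :
    dnOf a (addCellAt d i a) = rmCellAt d (i - 1) a := by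
  funext j
  rw [show dnOf a (addCellAt d i a) j = a j - (addCellAt d i a (j+1) - a (j+1)) from rfl,
    addCellAt_apply, rmCellAt_apply]
  have hiff : ((d : ℤ) ∣ (j + 1 - i)) ↔ ((d : ℤ) ∣ (j - (i - 1))) := by
    constructor <;> intro h <;> · convert h using 1; ring
  by_cases h : (d : ℤ) ∣ (j + 1 - i)
  · rw [if_pos h, if_pos (hiff.mp h)]; ring
  · rw [if_neg h, if_neg (fun hc => h (hiff.mpr hc))]; ring

lemma flip_ud {d L : ℕ} (hL : 1 ≤ L) {a c : ℤ → ℤ} (ha : IsCylindricShape d L a)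
    (hc : IsCylindricShape d L c) (h : StepUp d a c) :
    IsCylindricShape d L (dnOf a c) ∧ StepDn d a (dnOf a c) ∧ upOf a (dnOf a c) = c := by
  obtain ⟨i, rfl⟩ := h
  rw [dnOf_add]
  have hlt : a i < a (i - 1) := (shape_add_iff hL ha i).mp hc
  refine ⟨?_, ⟨i - 1, (add_rm_cancel d (i-1) a).symm⟩, ?_⟩
  · rw [shape_rm_iff hL ha, show i - 1 + 1 = i by ring]
    exact hlt
  · rw [upOf_rm, show i - 1 + 1 = i by ring]

lemma flip_du {d L : ℕ} (hL : 1 ≤ L) {a b : ℤ → ℤ} (ha : IsCylindricShape d L a)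
    (hb : IsCylindricShape d L b) (h : StepDn d a b) :
    IsCylindricShape d L (upOf a b) ∧ StepUp d a (upOf a b) ∧ dnOf a (upOf a b) = b := by
  obtain ⟨i, hi⟩ := h
  have hbrm : b = rmCellAt d i a := by rw [hi, rm_add_cancel]
  have hup : upOf a b = addCellAt d (i + 1) a := by rw [hbrm, upOf_rm]
  have hlt : a (i + 1) < a i := (shape_rm_iff hL ha i).mp (hbrm ▸ hb)
  refine ⟨?_, ⟨i + 1, hup⟩, ?_⟩
  · rw [hup, shape_add_iff hL ha, show i + 1 - 1 = i by ring]
    exact hlt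
  · rw [hup, dnOf_add, show i + 1 - 1 = i by ring, ← hbrm]

open Classical in
noncomputable def midUp (x y z : ℤ → ℤ) : ℤ → ℤ :=
  if z = x then upOf x y else fun j => max (x j) (z j)
open Classical in
noncomputable def midDn (x y z : ℤ → ℤ) : ℤ → ℤ :=
  if z = x then dnOf x y else fun j => min (x j) (z j)

lemma dvd_not_both {d : ℕ} {i j j' : ℤ} (hij : ¬ (d : ℤ) ∣ (i - j))
    (hA : (d : ℤ) ∣ (j' - j)) (hB : (d : ℤ) ∣ (j' - i)) : False := by
  apply hij
  have := dvd_sub hA hB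
  convert this using 1; rfl; ring

lemma not_dvd_one_of {d : ℕ} {i j : ℤ} (hij : ¬ (d : ℤ) ∣ (i - j)) :
    ¬ (d : ℤ) ∣ (1 : ℤ) := by
  intro hc
  apply hij
  rw [eq_one_of_cast_dvd_one hc]
  exact one_dvd _

lemma swap_du {d L : ℕ} (hL : 1 ≤ L) {x y z : ℤ → ℤ} (hx : IsCylindricShape d L x)
    (hy : IsCylindricShape d L y) (hz : IsCylindricShape d L z)
    (h1 : StepDn d x y) (h2 : StepUp d y z) :
    IsCylindricShape d L (midUp x y z) ∧ StepUp d x (midUp x y z) ∧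
      StepDn d (midUp x y z) z ∧ midDn x (midUp x y z) z = y := by
  by_cases hzx : z = x
  · subst hzx
    simp only [midUp, midDn, if_pos rfl]
    obtain ⟨hsh, hstep, hround⟩ := flip_du hL hx hy h1
    exact ⟨hsh, hstep, hstep, hround⟩
  · simp only [midUp, midDn, if_neg hzx]
    obtain ⟨j, hj⟩ := h1
    obtain ⟨i, hiz⟩ := h2
    have hij : ¬ (d : ℤ) ∣ (i - j) := by
      intro hc
      exact hzx (by rw [hiz, hj, addCellAt_congr hc])
    have hd1 : ¬ (d : ℤ) ∣ (1 : ℤ) := not_dvd_one_of hij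
    have hxv : ∀ j', x j' = y j' + (if (d : ℤ) ∣ (j' - j) then 1 else 0) := by
      intro j'; rw [hj, addCellAt_apply]
    have hzvv : ∀ j', z j' = y j' + (if (d : ℤ) ∣ (j' - i) then 1 else 0) := by
      intro j'; rw [hiz, addCellAt_apply]
    have c1 : (fun j' => max (x j') (z j')) = addCellAt d i x := by
      funext j'
      rw [addCellAt_apply, hxv j', hzvv j']
      by_cases hA : (d : ℤ) ∣ (j' - j) <;> by_cases hB : (d : ℤ) ∣ (j' - i)
      · exact (dvd_not_both hij hA hB).elim
      · simp only [if_pos hA, if_neg hB]; omega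
      · simp only [if_neg hA, if_pos hB]; omega
      · simp only [if_neg hA, if_neg hB]; omega
    have c2 : (fun j' => max (x j') (z j')) = addCellAt d j z := by
      funext j'
      rw [addCellAt_apply, hxv j', hzvv j']
      by_cases hA : (d : ℤ) ∣ (j' - j) <;> by_cases hB : (d : ℤ) ∣ (j' - i)
      · exact (dvd_not_both hij hA hB).elim
      · simp only [if_pos hA, if_neg hB]; omega
      · simp only [if_neg hA, if_pos hB]; omega
      · simp only [if_neg hA, if_neg hB]; omega
    have c4 : (fun j' => min (x j') (z j')) = y := by
      funext j'
      rw [hxv j', hzvv j']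
      by_cases hA : (d : ℤ) ∣ (j' - j) <;> by_cases hB : (d : ℤ) ∣ (j' - i)
      · exact (dvd_not_both hij hA hB).elim
      · simp only [if_pos hA, if_neg hB]; omega
      · simp only [if_neg hA, if_pos hB]; omega
      · simp only [if_neg hA, if_neg hB]; omega
    refine ⟨?_, ⟨i, c1⟩, ⟨j, c2⟩, c4⟩
    rw [c1, shape_add_iff hL hx]
    have e1 := hz.1 (i - 1) i (by linarith)
    rw [hzvv i, hzvv (i - 1)] at e1
    rw [hxv i, hxv (i - 1)]
    have hB1 : ¬ (d : ℤ) ∣ (i - j) := hij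
    have hB2 : ¬ (d : ℤ) ∣ (i - 1 - i) := by
      intro hc
      apply hd1
      rw [show (1 : ℤ) = -(i - 1 - i) by ring]
      exact dvd_neg.mpr hc
    have hDD : (d : ℤ) ∣ (i - i) := by simp
    rw [if_pos hDD, if_neg hB2] at e1
    rw [if_neg hB1]
    by_cases hC : (d : ℤ) ∣ (i - 1 - j)
    · rw [if_pos hC]; linarith
    · rw [if_neg hC]; linarith

lemma swap_ud {d L : ℕ} (hL : 1 ≤ L) {x y' z : ℤ → ℤ} (hx : IsCylindricShape d L x)
    (hy : IsCylindricShape d L y') (hz : IsCylindricShape d L z)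
    (h1 : StepUp d x y') (h2 : StepDn d y' z) :
    IsCylindricShape d L (midDn x y' z) ∧ StepDn d x (midDn x y' z) ∧
      StepUp d (midDn x y' z) z ∧ midUp x (midDn x y' z) z = y' := by
  by_cases hzx : z = x
  · subst hzx
    simp only [midUp, midDn, if_pos rfl]
    obtain ⟨hsh, hstep, hround⟩ := flip_ud hL hx hy h1
    exact ⟨hsh, hstep, hstep, hround⟩
  · simp only [midUp, midDn, if_neg hzx]
    obtain ⟨i, hi⟩ := h1
    obtain ⟨j, hjz⟩ := h2
    have hzrm : z = rmCellAt d j y' := by rw [hjz, rm_add_cancel]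
    have hij : ¬ (d : ℤ) ∣ (i - j) := by
      intro hc
      apply hzx
      rw [hzrm, hi, addCellAt_congr hc, rm_add_cancel]
    have hd1 : ¬ (d : ℤ) ∣ (1 : ℤ) := not_dvd_one_of hij
    have hzv : ∀ j', z j' = x j' + (if (d : ℤ) ∣ (j' - i) then 1 else 0)
        - (if (d : ℤ) ∣ (j' - j) then 1 else 0) := by
      intro j'
      rw [hzrm, rmCellAt_apply, hi, addCellAt_apply]
    have c1 : (fun j' => min (x j') (z j')) = rmCellAt d j x := by
      funext j'
      rw [hzv j', rmCellAt_apply]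
      by_cases hA : (d : ℤ) ∣ (j' - j) <;> by_cases hB : (d : ℤ) ∣ (j' - i)
      · exact (dvd_not_both hij hA hB).elim
      · simp only [if_pos hA, if_neg hB]; omega
      · simp only [if_neg hA, if_pos hB]; omega
      · simp only [if_neg hA, if_neg hB]; omega
    have c2 : z = addCellAt d i (fun j' => min (x j') (z j')) := by
      funext j'
      rw [addCellAt_apply]
      rw [hzv j']
      by_cases hA : (d : ℤ) ∣ (j' - j) <;> by_cases hB : (d : ℤ) ∣ (j' - i)
      · exact (dvd_not_both hij hA hB).elim
      · simp only [if_pos hA, if_neg hB]; omega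
      · simp only [if_neg hA, if_pos hB]; omega
      · simp only [if_neg hA, if_neg hB]; omega
    have c4 : (fun j' => max (x j') (z j')) = y' := by
      funext j'
      rw [hzv j', hi, addCellAt_apply]
      by_cases hA : (d : ℤ) ∣ (j' - j) <;> by_cases hB : (d : ℤ) ∣ (j' - i)
      · exact (dvd_not_both hij hA hB).elim
      · simp only [if_pos hA, if_neg hB]; omega
      · simp only [if_neg hA, if_pos hB]; omega
      · simp only [if_neg hA, if_neg hB]; omega
    refine ⟨?_, ⟨j, by rw [c1, add_rm_cancel]⟩, ⟨i, c2⟩, c4⟩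
    rw [c1, shape_rm_iff hL hx]
    have e1 := hz.1 j (j + 1) (by linarith)
    rw [hzv j, hzv (j + 1)] at e1
    have hB1 : ¬ (d : ℤ) ∣ (j - i) := by
      intro hc
      apply hij
      rw [show i - j = -(j - i) by ring]
      exact dvd_neg.mpr hc
    have hB2 : ¬ (d : ℤ) ∣ (j + 1 - j) := by
      intro hc
      apply hd1
      rw [show (1 : ℤ) = j + 1 - j by ring]
      exact hc
    have hDD : (d : ℤ) ∣ (j - j) := by simp
    rw [if_neg hB1, if_pos hDD, if_neg hB2] at e1
    by_cases hC : (d : ℤ) ∣ (j + 1 - i)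
    · rw [if_pos hC] at e1; linarith
    · rw [if_neg hC] at e1; linarith

def StepCond (d : ℕ) : Bool → (ℤ → ℤ) → (ℤ → ℤ) → Prop
  | true => StepUp d
  | false => StepDn d

def OctProp (d L : ℕ) (a : ℤ → ℤ) (n : ℕ) (w : Fin n → Bool)
    (p : Fin (n + 1) → ℤ → ℤ) : Prop :=
  p 0 = a ∧ (∀ k, IsCylindricShape d L (p k)) ∧
    ∀ k : Fin n, StepCond d (w k) (p k.castSucc) (p k.succ)

lemma card_octset_eq (d L : ℕ) (a : ℤ → ℤ) (n : ℕ) (w : Fin n → Bool) :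
    Nat.card (OctSet d L a n w) = Nat.card {p // OctProp d L a n w p} := by
  apply Nat.card_congr
  apply Equiv.subtypeEquivRight
  intro p
  refine and_congr_right fun _ => and_congr_right fun _ => forall_congr' fun k => ?_
  cases hwk : w k
  · simp only [hwk, if_false, Bool.false_eq_true]
    exact Iff.rfl
  · simp only [hwk, if_true]
    exact Iff.rfl

/-- the generic single-step flip. -/
lemma flip_step {d L : ℕ} (hL : 1 ≤ L) {b : Bool} {x y : ℤ → ℤ}
    (hx : IsCylindricShape d L x) (hy : IsCylindricShape d L y)
    (h : StepCond d b x y) :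
    IsCylindricShape d L (if b then dnOf x y else upOf x y) ∧
      StepCond d (!b) x (if b then dnOf x y else upOf x y) ∧
      (if (!b) then dnOf x (if b then dnOf x y else upOf x y)
        else upOf x (if b then dnOf x y else upOf x y)) = y := by
  cases b
  · simp only [Bool.not_false, if_true, if_false, Bool.false_eq_true]
    obtain ⟨h1, h2, h3⟩ := flip_du hL hx hy h
    exact ⟨h1, h2, h3⟩
  · simp only [Bool.not_true, if_true, if_false, Bool.false_eq_true]
    obtain ⟨h1, h2, h3⟩ := flip_ud hL hx hy h
    exact ⟨h1, h2, h3⟩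

section PathMoves

variable {d L : ℕ} {a : ℤ → ℤ} {n : ℕ}

/-- data for flipping the last step. -/
def flipVal (b : Bool) (x y : ℤ → ℤ) : ℤ → ℤ := if b then dnOf x y else upOf x y

lemma flip_mem (hL : 1 ≤ L) {w w' : Fin n → Bool} {t : Fin n} (ht : (t : ℕ) + 1 = n)
    (hw : ∀ k, k ≠ t → w' k = w k) (hwt : w' t = !(w t))
    (p : Fin (n + 1) → ℤ → ℤ) (hp : OctProp d L a n w p) :
    OctProp d L a n w'
      (Function.update p t.succ (flipVal (w t) (p t.castSucc) (p t.succ))) := by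
  obtain ⟨h0, hsh, hst⟩ := hp
  have hcs : t.castSucc ≠ t.succ := ne_of_lt (Fin.castSucc_lt_succ (i := t))
  have hmain := flip_step hL (hsh t.castSucc) (hsh t.succ) (hst t)
  refine ⟨?_, ?_, ?_⟩
  · rw [Function.update_of_ne (Fin.succ_ne_zero t).symm]
    exact h0
  · intro k
    by_cases hk : k = t.succ
    · subst hk
      rw [Function.update_self]
      exact hmain.1
    · rw [Function.update_of_ne hk]
      exact hsh k
  · intro k
    by_cases hk : k = t
    · subst hk
      rw [Function.update_of_ne hcs, Function.update_self, hwt]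
      exact hmain.2.1
    · have h1 : k.castSucc ≠ t.succ := by
        apply Fin.ne_of_val_ne
        rw [Fin.coe_castSucc, Fin.val_succ, ht]
        exact Nat.ne_of_lt k.isLt
      have h2 : k.succ ≠ t.succ := fun hc => hk (Fin.succ_inj.mp hc)
      rw [Function.update_of_ne h1, Function.update_of_ne h2, hw k hk]
      exact hst k

lemma card_flip (hL : 1 ≤ L) {w w' : Fin n → Bool} {t : Fin n} (ht : (t : ℕ) + 1 = n)
    (hw : ∀ k, k ≠ t → w' k = w k) (hwt : w' t = !(w t)) :
    Nat.card {p // OctProp d L a n w p} = Nat.card {p // OctProp d L a n w' p} := by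
  have hw2 : ∀ k, k ≠ t → w k = w' k := fun k hk => (hw k hk).symm
  have hwt2 : w t = !(w' t) := by rw [hwt, Bool.not_not]
  apply Nat.card_congr
  have key : ∀ (v v' : Fin n → Bool), (∀ k, k ≠ t → v' k = v k) → (v' t = !(v t)) →
      ∀ (p : {p // OctProp d L a n v p}),
      Function.update (Function.update p.1 t.succ
          (flipVal (v t) (p.1 t.castSucc) (p.1 t.succ))) t.succ
        (flipVal (v' t)
          ((Function.update p.1 t.succ (flipVal (v t) (p.1 t.castSucc) (p.1 t.succ))) t.castSucc)
          ((Function.update p.1 t.succ (flipVal (v t) (p.1 t.castSucc) (p.1 t.succ))) t.succ))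
        = p.1 := by
    intro v v' hv hvt p
    obtain ⟨h0, hsh, hst⟩ := p.2
    have hcs : t.castSucc ≠ t.succ := ne_of_lt (Fin.castSucc_lt_succ (i := t))
    have hmain := flip_step hL (hsh t.castSucc) (hsh t.succ) (hst t)
    rw [Function.update_of_ne hcs, Function.update_self, Function.update_idem, hvt]
    have : flipVal (!(v t)) (p.1 t.castSucc) (flipVal (v t) (p.1 t.castSucc) (p.1 t.succ))
        = p.1 t.succ := by
      unfold flipVal
      exact hmain.2.2
    rw [this, Function.update_eq_self]
  exact
    { toFun := fun p => ⟨_, flip_mem hL ht hw hwt p.1 p.2⟩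
      invFun := fun p => ⟨_, flip_mem hL ht hw2 hwt2 p.1 p.2⟩
      left_inv := fun p => Subtype.ext (by
        have := key w w' hw hwt p
        exact this)
      right_inv := fun p => Subtype.ext (by
        have := key w' w hw2 hwt2 p
        exact this) }

end PathMoves

section SwapMoves

variable {d L : ℕ} {a : ℤ → ℤ} {n : ℕ}

lemma swap_mem_up (hL : 1 ≤ L) {w w' : Fin n → Bool} {k0 k1 : Fin n}
    (h01 : (k0 : ℕ) + 1 = (k1 : ℕ))
    (hw : ∀ k, k ≠ k0 → k ≠ k1 → w' k = w k)
    (h0 : w k0 = false) (h1 : w k1 = true)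
    (h0' : w' k0 = true) (h1' : w' k1 = false)
    (p : Fin (n + 1) → ℤ → ℤ) (hp : OctProp d L a n w p) :
    OctProp d L a n w'
      (Function.update p k0.succ (midUp (p k0.castSucc) (p k0.succ) (p k1.succ))) := by
  obtain ⟨hz0, hsh, hst⟩ := hp
  have hne : k0 ≠ k1 := Fin.ne_of_val_ne (by omega)
  have hcs : k0.succ = k1.castSucc := by
    apply Fin.ext
    rw [Fin.val_succ, Fin.coe_castSucc, h01]
  have hstep0 : StepDn d (p k0.castSucc) (p k0.succ) := by
    have := hst k0; rwa [h0] at this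
  have hstep1 : StepUp d (p k0.succ) (p k1.succ) := by
    have := hst k1; rw [h1] at this; rwa [← hcs] at this
  have hmain := swap_du hL (hsh k0.castSucc) (hsh k0.succ) (hsh k1.succ) hstep0 hstep1
  have hne0cs : k0.castSucc ≠ k0.succ := ne_of_lt (Fin.castSucc_lt_succ (i := k0))
  have hne1s : k1.succ ≠ k0.succ := fun hc => hne (Fin.succ_inj.mp hc).symm
  refine ⟨?_, ?_, ?_⟩
  · rw [Function.update_of_ne (Fin.succ_ne_zero k0).symm]
    exact hz0
  · intro k
    by_cases hk : k = k0.succ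
    · subst hk; rw [Function.update_self]; exact hmain.1
    · rw [Function.update_of_ne hk]; exact hsh k
  · intro k
    by_cases hk0 : k = k0
    · subst hk0
      rw [Function.update_of_ne hne0cs, Function.update_self, h0']
      exact hmain.2.1
    · by_cases hk1 : k = k1
      · subst hk1
        rw [← hcs, Function.update_self, Function.update_of_ne hne1s, h1']
        exact hmain.2.2.1
      · have e1 : k.castSucc ≠ k0.succ := by
          rw [hcs]; exact fun hc => hk1 (Fin.castSucc_injective _ hc)
        have e2 : k.succ ≠ k0.succ := fun hc => hk0 (Fin.succ_inj.mp hc)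
        rw [Function.update_of_ne e1, Function.update_of_ne e2, hw k hk0 hk1]
        exact hst k

lemma swap_mem_dn (hL : 1 ≤ L) {w w' : Fin n → Bool} {k0 k1 : Fin n}
    (h01 : (k0 : ℕ) + 1 = (k1 : ℕ))
    (hw : ∀ k, k ≠ k0 → k ≠ k1 → w' k = w k)
    (h0 : w k0 = true) (h1 : w k1 = false)
    (h0' : w' k0 = false) (h1' : w' k1 = true)
    (p : Fin (n + 1) → ℤ → ℤ) (hp : OctProp d L a n w p) :
    OctProp d L a n w'
      (Function.update p k0.succ (midDn (p k0.castSucc) (p k0.succ) (p k1.succ))) := by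
  obtain ⟨hz0, hsh, hst⟩ := hp
  have hne : k0 ≠ k1 := Fin.ne_of_val_ne (by omega)
  have hcs : k0.succ = k1.castSucc := by
    apply Fin.ext
    rw [Fin.val_succ, Fin.coe_castSucc, h01]
  have hstep0 : StepUp d (p k0.castSucc) (p k0.succ) := by
    have := hst k0; rwa [h0] at this
  have hstep1 : StepDn d (p k0.succ) (p k1.succ) := by
    have := hst k1; rw [h1] at this; rwa [← hcs] at this
  have hmain := swap_ud hL (hsh k0.castSucc) (hsh k0.succ) (hsh k1.succ) hstep0 hstep1
  have hne0cs : k0.castSucc ≠ k0.succ := ne_of_lt (Fin.castSucc_lt_succ (i := k0))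
  have hne1s : k1.succ ≠ k0.succ := fun hc => hne (Fin.succ_inj.mp hc).symm
  refine ⟨?_, ?_, ?_⟩
  · rw [Function.update_of_ne (Fin.succ_ne_zero k0).symm]
    exact hz0
  · intro k
    by_cases hk : k = k0.succ
    · subst hk; rw [Function.update_self]; exact hmain.1
    · rw [Function.update_of_ne hk]; exact hsh k
  · intro k
    by_cases hk0 : k = k0
    · subst hk0
      rw [Function.update_of_ne hne0cs, Function.update_self, h0']
      exact hmain.2.1
    · by_cases hk1 : k = k1
      · subst hk1
        rw [← hcs, Function.update_self, Function.update_of_ne hne1s, h1']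
        exact hmain.2.2.1
      · have e1 : k.castSucc ≠ k0.succ := by
          rw [hcs]; exact fun hc => hk1 (Fin.castSucc_injective _ hc)
        have e2 : k.succ ≠ k0.succ := fun hc => hk0 (Fin.succ_inj.mp hc)
        rw [Function.update_of_ne e1, Function.update_of_ne e2, hw k hk0 hk1]
        exact hst k

lemma card_swap (hL : 1 ≤ L) {w w' : Fin n → Bool} {k0 k1 : Fin n}
    (h01 : (k0 : ℕ) + 1 = (k1 : ℕ))
    (hw : ∀ k, k ≠ k0 → k ≠ k1 → w' k = w k)
    (h0 : w k0 = false) (h1 : w k1 = true)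
    (h0' : w' k0 = true) (h1' : w' k1 = false) :
    Nat.card {p // OctProp d L a n w p} = Nat.card {p // OctProp d L a n w' p} := by
  have hne : k0 ≠ k1 := Fin.ne_of_val_ne (by omega)
  have hcs : k0.succ = k1.castSucc := by
    apply Fin.ext
    rw [Fin.val_succ, Fin.coe_castSucc, h01]
  have hne0cs : k0.castSucc ≠ k0.succ := ne_of_lt (Fin.castSucc_lt_succ (i := k0))
  have hne1s : k1.succ ≠ k0.succ := fun hc => hne (Fin.succ_inj.mp hc).symm
  have hw2 : ∀ k, k ≠ k0 → k ≠ k1 → w k = w' k := fun k u v => (hw k u v).symm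
  apply Nat.card_congr
  refine
    { toFun := fun p => ⟨_, swap_mem_up hL h01 hw h0 h1 h0' h1' p.1 p.2⟩
      invFun := fun p => ⟨_, swap_mem_dn hL h01 hw2 h0' h1' h0 h1 p.1 p.2⟩
      left_inv := fun p => Subtype.ext ?_
      right_inv := fun p => Subtype.ext ?_ }
  · obtain ⟨hz0, hsh, hst⟩ := p.2
    have hstep0 : StepDn d (p.1 k0.castSucc) (p.1 k0.succ) := by
      have := hst k0; rwa [h0] at this
    have hstep1 : StepUp d (p.1 k0.succ) (p.1 k1.succ) := by
      have := hst k1; rw [h1] at this; rwa [← hcs] at this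
    have hmain := swap_du hL (hsh k0.castSucc) (hsh k0.succ) (hsh k1.succ) hstep0 hstep1
    have key : ∀ q : Fin (n + 1) → ℤ → ℤ,
        q = Function.update p.1 k0.succ (midUp (p.1 k0.castSucc) (p.1 k0.succ) (p.1 k1.succ)) →
        Function.update q k0.succ (midDn (q k0.castSucc) (q k0.succ) (q k1.succ)) = p.1 := by
      intro q hq
      subst hq
      rw [Function.update_of_ne hne0cs, Function.update_self, Function.update_of_ne hne1s,
        Function.update_idem, hmain.2.2.2, Function.update_eq_self]
    exact key _ rfl
  · obtain ⟨hz0, hsh, hst⟩ := p.2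
    have hstep0 : StepUp d (p.1 k0.castSucc) (p.1 k0.succ) := by
      have := hst k0; rwa [h0'] at this
    have hstep1 : StepDn d (p.1 k0.succ) (p.1 k1.succ) := by
      have := hst k1; rw [h1'] at this; rwa [← hcs] at this
    have hmain := swap_ud hL (hsh k0.castSucc) (hsh k0.succ) (hsh k1.succ) hstep0 hstep1
    have key : ∀ q : Fin (n + 1) → ℤ → ℤ,
        q = Function.update p.1 k0.succ (midDn (p.1 k0.castSucc) (p.1 k0.succ) (p.1 k1.succ)) →
        Function.update q k0.succ (midUp (q k0.castSucc) (q k0.succ) (q k1.succ)) = p.1 := by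
      intro q hq
      subst hq
      rw [Function.update_of_ne hne0cs, Function.update_self, Function.update_of_ne hne1s,
        Function.update_idem, hmain.2.2.2, Function.update_eq_self]
    exact key _ rfl

end SwapMoves

section Induction

variable {d L : ℕ} {a : ℤ → ℤ} {n : ℕ}

/-- measure used for induction on words. -/
def wMeasure (n : ℕ) (w : Fin n → Bool) : ℕ :=
  ∑ k : Fin n, (if w k then 0 else n - (k : ℕ))

lemma wMeasure_eq_zero {w : Fin n → Bool} (h : wMeasure n w = 0) :
    w = fun _ => true := by
  funext k
  by_contra hk
  have hkf : w k = false := by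
    cases hwk : w k
    · rfl
    · exact absurd hwk hk
  have := (Finset.sum_eq_zero_iff.mp h) k (Finset.mem_univ k)
  rw [hkf, if_neg (by simp)] at this
  have := k.isLt
  omega

lemma wMeasure_flip {w : Fin n → Bool} {t : Fin n} (htf : w t = false)
    (ht : (t : ℕ) + 1 = n) :
    wMeasure n (Function.update w t true) < wMeasure n w := by
  unfold wMeasure
  rw [← Finset.add_sum_erase _ _ (Finset.mem_univ t),
    ← Finset.add_sum_erase _ (fun k => if w k then 0 else n - (k : ℕ)) (Finset.mem_univ t)]
  have hrest : ∑ k ∈ Finset.univ.erase t, (if Function.update w t true k then 0 else n - (k : ℕ))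
      = ∑ k ∈ Finset.univ.erase t, (if w k then 0 else n - (k : ℕ)) := by
    apply Finset.sum_congr rfl
    intro k hk
    rw [Function.update_of_ne (Finset.ne_of_mem_erase hk)]
  rw [hrest]
  apply Nat.add_lt_add_right
  rw [Function.update_self, if_pos rfl, htf, if_neg (by simp)]
  omega

lemma wMeasure_swap {w : Fin n → Bool} {k0 k1 : Fin n} (h01 : (k0 : ℕ) + 1 = (k1 : ℕ))
    (h0 : w k0 = false) (h1 : w k1 = true) :
    wMeasure n (Function.update (Function.update w k0 true) k1 false) < wMeasure n w := by
  have hne : k0 ≠ k1 := Fin.ne_of_val_ne (by omega)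
  set w' := Function.update (Function.update w k0 true) k1 false with hw'
  have ht0 : k0 ∈ Finset.univ.erase k1 := Finset.mem_erase.mpr ⟨hne, Finset.mem_univ k0⟩
  unfold wMeasure
  rw [← Finset.add_sum_erase _ _ (Finset.mem_univ k1),
    ← Finset.add_sum_erase _ (fun k => if w k then 0 else n - (k : ℕ)) (Finset.mem_univ k1),
    ← Finset.add_sum_erase _ _ ht0,
    ← Finset.add_sum_erase _ (fun k => if w k then 0 else n - (k : ℕ)) ht0]
  have hrest : ∑ k ∈ (Finset.univ.erase k1).erase k0, (if w' k then 0 else n - (k : ℕ))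
      = ∑ k ∈ (Finset.univ.erase k1).erase k0, (if w k then 0 else n - (k : ℕ)) := by
    apply Finset.sum_congr rfl
    intro k hk
    have hk0 : k ≠ k0 := Finset.ne_of_mem_erase hk
    have hk1 : k ≠ k1 := Finset.ne_of_mem_erase (Finset.mem_of_mem_erase hk)
    rw [hw', Function.update_of_ne hk1, Function.update_of_ne hk0]
  rw [hrest]
  have e1 : w' k1 = false := Function.update_self _ _ _
  have e2 : w' k0 = true := by
    rw [hw', Function.update_of_ne hne, Function.update_self]
  rw [e1, e2, h0, h1, if_pos rfl, if_pos rfl, if_neg (by simp), if_neg (by simp)]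
  have := k1.isLt
  omega

lemma key_induction (hL : 1 ≤ L) :
    ∀ (N : ℕ) (w : Fin n → Bool), wMeasure n w ≤ N →
      Nat.card {p // OctProp d L a n w p} =
        Nat.card {p // OctProp d L a n (fun _ => true) p} := by
  intro N
  induction N with
  | zero =>
    intro w hw
    rw [wMeasure_eq_zero (Nat.le_zero.mp hw)]
  | succ N ih =>
    intro w hw
    by_cases hall : ∀ k, w k = true
    · rw [show w = (fun _ => true) from funext hall]
    · push_neg at hall
      obtain ⟨k, hk⟩ := hall
      have hkf : w k = false := by
        cases hwk : w k
        · rfl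
        · exact absurd hwk hk
      have hS : (Finset.univ.filter (fun k => w k = false)).Nonempty :=
        ⟨k, Finset.mem_filter.mpr ⟨Finset.mem_univ k, hkf⟩⟩
      set t := (Finset.univ.filter (fun k => w k = false)).max' hS with hT
      have htf : w t = false :=
        (Finset.mem_filter.mp ((Finset.univ.filter (fun k => w k = false)).max'_mem hS)).2
      have hmax : ∀ k', w k' = false → k' ≤ t := fun k' hk' =>
        Finset.le_max' _ k' (Finset.mem_filter.mpr ⟨Finset.mem_univ k', hk'⟩)
      by_cases hlast : (t : ℕ) + 1 = n
      · -- flip the last letter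
        have hcard := card_flip (d := d) (L := L) (a := a) hL (w := w)
          (w' := Function.update w t true) hlast
          (fun k hk => Function.update_of_ne hk _ _)
          (by rw [Function.update_self, htf]; rfl)
        rw [hcard]
        apply ih
        have := wMeasure_flip htf hlast
        omega
      · -- swap
        have hlt : (t : ℕ) + 1 < n := by
          have := t.isLt
          omega
        set k1 : Fin n := ⟨(t : ℕ) + 1, hlt⟩ with hk1def
        have h01 : (t : ℕ) + 1 = (k1 : ℕ) := rfl
        have hk1t : w k1 = true := by
          cases hwk : w k1
          · exfalso
            have := hmax k1 hwk
            rw [Fin.le_def] at this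
            omega
          · rfl
        have hne : t ≠ k1 := Fin.ne_of_val_ne (by omega)
        set w' := Function.update (Function.update w t true) k1 false with hw'
        have hcard := card_swap (d := d) (L := L) (a := a) hL (w := w) (w' := w')
          h01
          (fun k hkt hkk1 => by
            rw [hw', Function.update_of_ne hkk1, Function.update_of_ne hkt])
          htf hk1t
          (by rw [hw', Function.update_of_ne hne, Function.update_self])
          (by rw [hw', Function.update_self])
        rw [hcard]
        apply ih
        have := wMeasure_swap h01 htf hk1t
        rw [← hw'] at this
        omega

end Induction

end Oct16

/-- The number of oscillating cylindric tableaux of length `n` starting at `α` is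
independent of the type `w ∈ {+,-}^n`; in particular it equals the number of
standard cylindric tableaux with `n` cells and inner shape `α` (type `+^n`). -/
theorem stmt16 (d L : ℕ) (hd : 1 ≤ d) (hL : 1 ≤ L) (a : ℤ → ℤ)
    (ha : IsCylindricShape d L a) (n : ℕ) :
    (∀ w w' : Fin n → Bool,
      Nat.card (OctSet d L a n w) = Nat.card (OctSet d L a n w')) ∧
    (∀ w : Fin n → Bool,
      Nat.card (OctSet d L a n w) = Nat.card (OctSet d L a n (fun _ => true))) := by
  have h2 : ∀ w : Fin n → Bool,
      Nat.card (OctSet d L a n w) = Nat.card (OctSet d L a n (fun _ => true)) := by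
    intro w
    rw [Oct16.card_octset_eq, Oct16.card_octset_eq]
    exact Oct16.key_induction hL (Oct16.wMeasure n w) w le_rfl
  exact ⟨fun w w' => (h2 w).trans (h2 w').symm, h2⟩
end

section
/- Define the forward local rule on cylindric shapes of period (d,L): given shapes ρ^{ll} covered by both ρ^{ul} and ρ^{lr}, the output ρ^{ur} is ρ^{ul} ∪ ρ^{lr} (coordinatewise max) if ρ^{ul} ≠ ρ^{lr}, and if ρ^{ul} = ρ^{lr} is obtained from ρ^{ll} by adding a cell in row i, then ρ^{ur} is obtained from ρ^{ul} by adding a cell in row i+1 (mod d). This rule is well-defined: ρ^{ur} is always a cylindric shape covering both ρ^{ul} and ρ^{lr}. -/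
lemma anti_of_succ (b : ℤ → ℤ) (h : ∀ j : ℤ, b (j + 1) ≤ b j) :
    ∀ i j : ℤ, i ≤ j → b j ≤ b i := by
  intro i j hij
  obtain ⟨n, rfl⟩ : ∃ n : ℕ, j = i + n := ⟨(j - i).toNat, by omega⟩
  clear hij
  induction n with
  | zero => simp
  | succ n ih =>
      have e : (i + ((n + 1 : ℕ) : ℤ)) = (i + (n : ℤ)) + 1 := by push_cast; ring
      rw [e]
      exact (h (i + (n : ℤ))).trans ih

lemma dvd_shift (d : ℕ) (i k : ℤ) : ((d:ℤ) ∣ (k + d - i)) ↔ ((d:ℤ) ∣ (k - i)) := by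
  constructor <;> intro h
  · have := Int.dvd_sub h (dvd_refl (d:ℤ)); convert this using 1; ring
  · have := Int.dvd_add h (dvd_refl (d:ℤ)); convert this using 1; ring

lemma addCell_periodic (d L : ℕ) (i : ℤ) (a : ℤ → ℤ)
    (h : ∀ k : ℤ, a k = a (k + d) + L) :
    ∀ k : ℤ, addCellAt d i a k = addCellAt d i a (k + d) + L := by
  intro k
  unfold addCellAt
  by_cases hk : (d:ℤ) ∣ (k - i)
  · rw [if_pos hk, if_pos ((dvd_shift d i k).2 hk), h k]; ring
  · rw [if_neg hk, if_neg (fun hc => hk ((dvd_shift d i k).1 hc)), h k]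

/-- The forward local rule of cylindric growth diagrams is well-defined:
if `ρul ≠ ρlr` then their coordinatewise max is a cylindric shape covering both;
and if `ρul = ρlr` is obtained from `ρll` by adding a cell in row `i`, then adding a
cell in row `i+1 (mod d)` to `ρul` again produces a cylindric shape covering it. -/
theorem stmt18 (d L : ℕ) (hd : 1 ≤ d) (hL : 1 ≤ L) (ρll ρul ρlr : ℤ → ℤ)
    (h1 : CovShape d L ρll ρul) (h2 : CovShape d L ρll ρlr) :
    (ρul ≠ ρlr →
      CovShape d L ρul (fun i => max (ρul i) (ρlr i)) ∧
      CovShape d L ρlr (fun i => max (ρul i) (ρlr i))) ∧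
    (∀ i : ℤ, ρul = ρlr → ρul = addCellAt d i ρll →
      CovShape d L ρul (addCellAt d (i + 1) ρul)) := by
  obtain ⟨hll, hul, i1, hi1⟩ := h1
  obtain ⟨-, hlr, i2, hi2⟩ := h2
  constructor
  · intro hne
    -- residues differ
    have hndvd : ¬ (d:ℤ) ∣ (i1 - i2) := by
      intro hdvd
      apply hne
      rw [hi1, hi2]
      funext j
      unfold addCellAt
      have hiff : (d:ℤ) ∣ (j - i1) ↔ (d:ℤ) ∣ (j - i2) := by
        constructor <;> intro h
        · have := Int.dvd_add h hdvd; convert this using 1; ring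
        · have := Int.dvd_sub h hdvd; convert this using 1; ring
      by_cases hj : (d:ℤ) ∣ (j - i1)
      · rw [if_pos hj, if_pos (hiff.1 hj)]
      · rw [if_neg hj, if_neg (fun hc => hj (hiff.2 hc))]
    have hmaxshape : IsCylindricShape d L (fun i => max (ρul i) (ρlr i)) := by
      constructor
      · intro a b hab
        exact max_le_max (hul.1 a b hab) (hlr.1 a b hab)
      · intro k
        simp only [hul.2 k, hlr.2 k]
        omega
    have hulval : ∀ j : ℤ, ρul j = if (d:ℤ) ∣ (j - i1) then ρll j + 1 else ρll j := by
      intro j; rw [hi1]; rfl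
    have hlrval : ∀ j : ℤ, ρlr j = if (d:ℤ) ∣ (j - i2) then ρll j + 1 else ρll j := by
      intro j; rw [hi2]; rfl
    have hnotboth : ∀ j : ℤ, ¬ ((d:ℤ) ∣ (j - i1) ∧ (d:ℤ) ∣ (j - i2)) := by
      rintro j ⟨ha, hb⟩
      apply hndvd
      have := Int.dvd_sub hb ha
      convert this using 1; ring
    have hmax1 : (fun i => max (ρul i) (ρlr i)) = addCellAt d i2 ρul := by
      funext j
      unfold addCellAt
      by_cases hj : (d:ℤ) ∣ (j - i2)
      · have hj1 : ¬ (d:ℤ) ∣ (j - i1) := fun hc => hnotboth j ⟨hc, hj⟩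
        rw [if_pos hj]
        simp only [hulval j, hlrval j, if_pos hj, if_neg hj1]
        omega
      · rw [if_neg hj]
        simp only [hulval j, hlrval j, if_neg hj]
        by_cases hj1 : (d:ℤ) ∣ (j - i1) <;> simp [hj1] <;> omega
    have hmax2 : (fun i => max (ρul i) (ρlr i)) = addCellAt d i1 ρlr := by
      funext j
      unfold addCellAt
      by_cases hj : (d:ℤ) ∣ (j - i1)
      · have hj2 : ¬ (d:ℤ) ∣ (j - i2) := fun hc => hnotboth j ⟨hj, hc⟩
        rw [if_pos hj]
        simp only [hulval j, hlrval j, if_pos hj, if_neg hj2]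
        omega
      · rw [if_neg hj]
        simp only [hulval j, hlrval j, if_neg hj]
        by_cases hj2 : (d:ℤ) ∣ (j - i2) <;> simp [hj2] <;> omega
    exact ⟨⟨hul, hmaxshape, i2, hmax1⟩, ⟨hlr, hmaxshape, i1, hmax2⟩⟩
  · intro i _ hcell
    refine ⟨hul, ⟨?_, addCell_periodic d L (i+1) ρul hul.2⟩, i + 1, rfl⟩
    apply anti_of_succ
    intro j
    unfold addCellAt
    by_cases hA : (d:ℤ) ∣ (j + 1 - (i + 1))
    · have hA' : (d:ℤ) ∣ (j - i) := by convert hA using 1; ring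
      rw [if_pos hA]
      by_cases hB : (d:ℤ) ∣ (j - (i + 1))
      · rw [if_pos hB]
        have := hul.1 j (j + 1) (by omega)
        omega
      · rw [if_neg hB]
        have hnj1 : ¬ (d:ℤ) ∣ (j + 1 - i) := by
          intro hc
          apply hB
          have hone : (d:ℤ) ∣ 1 := by
            have := Int.dvd_sub hc hA'; convert this using 1; ring
          have := Int.dvd_sub hA' hone
          convert this using 1; ring
        have e1 : ρul j = ρll j + 1 := by
          rw [hcell]; unfold addCellAt; rw [if_pos hA']
        have e2 : ρul (j + 1) = ρll (j + 1) := by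
          rw [hcell]; unfold addCellAt; rw [if_neg hnj1]
        have := hll.1 j (j + 1) (by omega)
        omega
    · rw [if_neg hA]
      have := hul.1 j (j + 1) (by omega)
      by_cases hB : (d:ℤ) ∣ (j - (i + 1))
      · rw [if_pos hB]; omega
      · rw [if_neg hB]; exact this
end

section
/- The forward and backward local rules on cylindric shapes are mutually inverse: if ρ^{ur} is the output of the forward local rule applied to (ρ^{ll}, ρ^{ul}, ρ^{lr}), then ρ^{ll} is the output of the backward local rule applied to (ρ^{ur}, ρ^{ul}, ρ^{lr}), and conversely. -/
/-- `ρur` is the output of the forward local rule applied to `(ρll, ρul, ρlr)`. -/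
def ForwardOut (d : ℕ) (ρll ρul ρlr ρur : ℤ → ℤ) : Prop :=
  (ρul ≠ ρlr ∧ ρur = fun i => max (ρul i) (ρlr i)) ∨
  (ρul = ρlr ∧ ∃ i : ℤ, ρul = addCellAt d i ρll ∧ ρur = addCellAt d (i + 1) ρul)

/-- `ρll` is the output of the backward local rule applied to `(ρur, ρul, ρlr)`. -/
def BackwardOut (d : ℕ) (ρur ρul ρlr ρll : ℤ → ℤ) : Prop :=
  (ρul ≠ ρlr ∧ ρll = fun i => min (ρul i) (ρlr i)) ∨
  (ρul = ρlr ∧ ∃ i : ℤ, ρur = addCellAt d (i + 1) ρul ∧ ρul = addCellAt d i ρll)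

/-- The forward and backward local rules on cylindric shapes are mutually inverse. -/
theorem stmt19 (d L : ℕ) (hd : 1 ≤ d) (hL : 1 ≤ L) (ρll ρul ρlr ρur : ℤ → ℤ)
    (h1 : CovShape d L ρll ρul) (h2 : CovShape d L ρll ρlr)
    (h3 : CovShape d L ρul ρur) (h4 : CovShape d L ρlr ρur) :
    ForwardOut d ρll ρul ρlr ρur ↔ BackwardOut d ρur ρul ρlr ρll := by
  obtain ⟨-, -, i, hi⟩ := h1
  obtain ⟨-, -, j, hj⟩ := h2
  obtain ⟨-, -, i', hi'⟩ := h3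
  obtain ⟨-, -, j', hj'⟩ := h4
  by_cases he : ρul = ρlr
  · constructor
    · rintro (⟨hne, -⟩ | ⟨-, k, ha, hb⟩)
      · exact absurd he hne
      · exact Or.inr ⟨he, k, hb, ha⟩
    · rintro (⟨hne, -⟩ | ⟨-, k, ha, hb⟩)
      · exact absurd he hne
      · exact Or.inr ⟨he, k, hb, ha⟩
  · -- the two cells added to ρll are in different residue classes
    have hij : ¬ (d : ℤ) ∣ (i - j) := by
      intro hdvd
      apply he
      funext k
      have hiff : ((d : ℤ) ∣ k - i) ↔ ((d : ℤ) ∣ k - j) := by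
        constructor
        · intro h
          have := dvd_add h hdvd
          rwa [sub_add_sub_cancel] at this
        · intro h
          have := dvd_sub h hdvd
          have e : k - j - (i - j) = k - i + 0 := by ring
          rwa [e, add_zero] at this
      rw [hi, hj]
      simp only [addCellAt, hiff]
    have hnotboth : ∀ k : ℤ, ¬ (((d : ℤ) ∣ k - i) ∧ ((d : ℤ) ∣ k - j)) := by
      rintro k ⟨h₁, h₂⟩
      apply hij
      have := dvd_sub h₂ h₁
      have e : k - j - (k - i) = i - j + 0 := by ring
      rwa [e, add_zero] at this
    -- min claim
    have hmin : ρll = fun k => min (ρul k) (ρlr k) := by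
      funext k
      rw [hi, hj]
      simp only [addCellAt]
      by_cases h₁ : (d : ℤ) ∣ k - i <;> by_cases h₂ : (d : ℤ) ∣ k - j
      · exact absurd ⟨h₁, h₂⟩ (hnotboth k)
      all_goals simp only [if_pos, if_neg, h₁, h₂, if_true, if_false] <;> omega
    -- the cell added on top of ρul is in the residue class of j
    have hji' : (d : ℤ) ∣ j - i' := by
      have e1 : ρur j = if (d : ℤ) ∣ (j - i') then ρul j + 1 else ρul j := by
        rw [hi']; rfl
      have e2 : ρur j = if (d : ℤ) ∣ (j - j') then ρlr j + 1 else ρlr j := by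
        rw [hj']; rfl
      have e3 : ρlr j = ρll j + 1 := by
        rw [hj]; simp [addCellAt]
      have e4 : ρul j = ρll j := by
        rw [hi]
        simp only [addCellAt]
        rw [if_neg]
        intro h
        exact hnotboth j ⟨h, by simp⟩
      by_contra hcon
      rw [if_neg hcon, e4] at e1
      split_ifs at e2 <;> omega
    have hk' : ∀ k : ℤ, ((d : ℤ) ∣ k - i') ↔ ((d : ℤ) ∣ k - j) := by
      intro k
      constructor
      · intro h
        have := dvd_sub h hji'
        have e : k - i' - (j - i') = k - j + 0 := by ring
        rwa [e, add_zero] at this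
      · intro h
        have := dvd_add h hji'
        rwa [sub_add_sub_cancel] at this
    -- max claim
    have hmax : ρur = fun k => max (ρul k) (ρlr k) := by
      funext k
      rw [hi', hi, hj]
      simp only [addCellAt, hk']
      by_cases h₁ : (d : ℤ) ∣ k - i <;> by_cases h₂ : (d : ℤ) ∣ k - j
      · exact absurd ⟨h₁, h₂⟩ (hnotboth k)
      all_goals simp only [if_pos, if_neg, h₁, h₂, if_true, if_false] <;> omega
    constructor
    · intro _; exact Or.inl ⟨he, hmin⟩
    · intro _; exact Or.inl ⟨he, hmax⟩
end
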